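/- arXiv:1008.3457 — 5 statements merged into one kernel-verified Lean document; each statement's English description precedes it below -/
import Mathlib

section
/- Let a, b be positive reals with a ≤ b, and let g : 𝕋 × 𝕋 → ℝ be continuous with a ≤ g(x₁,x₂) ≤ b for all x₁, x₂. Define the map T on positive continuous functions ρ on 𝕋 with ∫ 1/ρ = 1 by T(ρ)(x₁) = Z · ∫ g(x₁,x₂) / (∫ g(y,x₂)/ρ(y) dy) dx₂, where Z is chosen so that ∫ 1/T(ρ) = 1. Then for every such ρ, T(ρ) satisfies a²/b² ≤ T(ρ) ≤ b²/a². -/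
open MeasureTheory

/-- The fixed-point map `T` of the tensorized ABF stationary-state
iteration maps normalized positive continuous functions on the torus into the
band `[a²/b², b²/a²]`. -/
theorem abf_fixed_point_map_bounds
    (a b : ℝ) (ha : 0 < a) (hab : a ≤ b)
    (g : UnitAddCircle × UnitAddCircle → ℝ) (hg : Continuous g)
    (hga : ∀ x₁ x₂, a ≤ g (x₁, x₂)) (hgb : ∀ x₁ x₂, g (x₁, x₂) ≤ b)
    (ρ : UnitAddCircle → ℝ) (hρcont : Continuous ρ) (hρpos : ∀ x, 0 < ρ x)
    (hρnorm : ∫ x : UnitAddCircle, 1 / ρ x = 1)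
    (Z : ℝ)
    (Tρ : UnitAddCircle → ℝ)
    (hT : ∀ x₁, Tρ x₁ =
      Z * ∫ x₂ : UnitAddCircle,
        g (x₁, x₂) / (∫ y : UnitAddCircle, g (y, x₂) / ρ y))
    (hZ : ∫ x₁ : UnitAddCircle, 1 / Tρ x₁ = 1) :
    ∀ x₁, a ^ 2 / b ^ 2 ≤ Tρ x₁ ∧ Tρ x₁ ≤ b ^ 2 / a ^ 2 := by
  have hb : (0:ℝ) < b := lt_of_lt_of_le ha hab
  haveI hprob : IsProbabilityMeasure (volume : Measure UnitAddCircle) :=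
    ⟨UnitAddCircle.measure_univ⟩
  -- integrability of continuous functions
  have hint : ∀ f : UnitAddCircle → ℝ, Continuous f → Integrable f := fun f hf =>
    hf.integrable_of_hasCompactSupport (HasCompactSupport.of_compactSpace f)
  set D : UnitAddCircle → ℝ := fun x₂ => ∫ y : UnitAddCircle, g (y, x₂) / ρ y with hDdef
  have hcont1 : ∀ x₂, Continuous fun y => g (y, x₂) / ρ y := fun x₂ =>
    (hg.comp (continuous_id.prodMk continuous_const)).div hρcont (fun y => (hρpos y).ne')
  -- bounds on D
  have hDa : ∀ x₂, a ≤ D x₂ := by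
    intro x₂
    have h1 : ∀ y, a / ρ y ≤ g (y, x₂) / ρ y := fun y =>
      div_le_div_of_nonneg_right (hga y x₂) (hρpos y).le
    calc a = ∫ y : UnitAddCircle, a * (1 / ρ y) := by
              rw [integral_const_mul, hρnorm, mul_one]
      _ ≤ D x₂ := by
          refine integral_mono ?_ (hint _ (hcont1 x₂)) ?_
          · exact (hint _ ((continuous_const.div hρcont fun y => (hρpos y).ne'))).const_mul a
          · intro y
            simpa [mul_one_div, div_eq_mul_inv] using h1 y
  have hDb : ∀ x₂, D x₂ ≤ b := by
    intro x₂
    have h1 : ∀ y, g (y, x₂) / ρ y ≤ b / ρ y := fun y =>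
      div_le_div_of_nonneg_right (hgb y x₂) (hρpos y).le
    calc D x₂ ≤ ∫ y : UnitAddCircle, b * (1 / ρ y) := by
          refine integral_mono (hint _ (hcont1 x₂)) ?_ ?_
          · exact (hint _ ((continuous_const.div hρcont fun y => (hρpos y).ne'))).const_mul b
          · intro y
            simpa [mul_one_div, div_eq_mul_inv] using h1 y
      _ = b := by rw [integral_const_mul, hρnorm, mul_one]
  have hDpos : ∀ x₂, 0 < D x₂ := fun x₂ => lt_of_lt_of_le ha (hDa x₂)
  -- continuity of D
  have hDcont : Continuous D := by
    have : Continuous fun p : UnitAddCircle × UnitAddCircle => g (p.2, p.1) / ρ p.2 :=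
      (hg.comp (continuous_snd.prodMk continuous_fst)).div (hρcont.comp continuous_snd)
        (fun p => (hρpos p.2).ne')
    have h := continuous_parametric_integral_of_continuous (μ := volume)
      (f := fun x₂ y => g (y, x₂) / ρ y) this (isCompact_univ (X := UnitAddCircle))
    simpa [Measure.restrict_univ] using h
  -- define F
  set F : UnitAddCircle → ℝ := fun x₁ => ∫ x₂ : UnitAddCircle, g (x₁, x₂) / D x₂ with hFdef
  have hcont2 : ∀ x₁, Continuous fun x₂ => g (x₁, x₂) / D x₂ := fun x₁ =>
    (hg.comp (continuous_const.prodMk continuous_id)).div hDcont (fun x₂ => (hDpos x₂).ne')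
  have hFa : ∀ x₁, a / b ≤ F x₁ := by
    intro x₁
    calc a / b = ∫ _ : UnitAddCircle, a / b := by simp
      _ ≤ F x₁ := by
        refine integral_mono (integrable_const _) (hint _ (hcont2 x₁)) fun x₂ => ?_
        exact div_le_div₀ (by linarith [hab, hga x₁ x₂]) (hga x₁ x₂) (hDpos x₂) (hDb x₂)
  have hFb : ∀ x₁, F x₁ ≤ b / a := by
    intro x₁
    calc F x₁ ≤ ∫ _ : UnitAddCircle, b / a := by
          refine integral_mono (hint _ (hcont2 x₁)) (integrable_const _) fun x₂ => ?_
          exact div_le_div₀ (le_of_lt hb) (hgb x₁ x₂) ha (hDa x₂)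
      _ = b / a := by simp
  have hFpos : ∀ x₁, 0 < F x₁ := fun x₁ => lt_of_lt_of_le (div_pos ha hb) (hFa x₁)
  have hTZ : ∀ x₁, Tρ x₁ = Z * F x₁ := hT
  -- Z ≠ 0
  have hZne : Z ≠ 0 := by
    intro h
    have : (∫ x₁ : UnitAddCircle, 1 / Tρ x₁) = 0 := by
      have : ∀ x₁, 1 / Tρ x₁ = 0 := by
        intro x₁; rw [hTZ x₁, h, zero_mul]; simp
      simp [this]
    rw [hZ] at this
    exact one_ne_zero this
  -- continuity of F
  have hFcont : Continuous F := by
    have : Continuous fun p : UnitAddCircle × UnitAddCircle => g (p.1, p.2) / D p.2 :=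
      hg.div (hDcont.comp continuous_snd) (fun p => (hDpos p.2).ne')
    have h := continuous_parametric_integral_of_continuous (μ := volume)
      (f := fun x₁ x₂ => g (x₁, x₂) / D x₂) this (isCompact_univ (X := UnitAddCircle))
    simpa [Measure.restrict_univ] using h
  have hIcont : Continuous fun x₁ => 1 / F x₁ :=
    continuous_const.div hFcont (fun x₁ => (hFpos x₁).ne')
  -- Z = ∫ 1/F
  set I : ℝ := ∫ x₁ : UnitAddCircle, 1 / F x₁ with hIdef
  have key : Z = I := by
    calc Z = Z * ∫ x₁ : UnitAddCircle, 1 / Tρ x₁ := by rw [hZ, mul_one]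
      _ = ∫ x₁ : UnitAddCircle, Z * (1 / Tρ x₁) := (integral_const_mul Z _).symm
      _ = I := by
        rw [hIdef]
        congr 1
        funext x₁
        rw [hTZ x₁, one_div, mul_inv, ← mul_assoc, mul_inv_cancel₀ hZne, one_mul, one_div]
  -- bounds on I
  have hIa : a / b ≤ I := by
    calc a / b = ∫ _ : UnitAddCircle, a / b := by simp
      _ ≤ I := by
        refine integral_mono (integrable_const _) (hint _ hIcont) fun x₁ => ?_
        have := one_div_le_one_div_of_le (hFpos x₁) (hFb x₁)
        rwa [one_div_div] at this
  have hIb : I ≤ b / a := by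
    calc I ≤ ∫ _ : UnitAddCircle, b / a := by
          refine integral_mono (hint _ hIcont) (integrable_const _) fun x₁ => ?_
          have := one_div_le_one_div_of_le (div_pos ha hb) (hFa x₁)
          rwa [one_div_div] at this
      _ = b / a := by simp
  have hZa : a / b ≤ Z := key ▸ hIa
  have hZb : Z ≤ b / a := key ▸ hIb
  -- conclude
  intro x₁
  rw [hTZ x₁]
  constructor
  · calc a ^ 2 / b ^ 2 = (a / b) * (a / b) := by ring
      _ ≤ Z * F x₁ :=
        mul_le_mul hZa (hFa x₁) (le_of_lt (div_pos ha hb)) (le_trans (le_of_lt (div_pos ha hb)) hZa)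
  · calc Z * F x₁ ≤ (b / a) * (b / a) :=
        mul_le_mul hZb (hFb x₁) (le_of_lt (hFpos x₁)) (le_of_lt (div_pos hb ha))
      _ = b ^ 2 / a ^ 2 := by ring
end

section
/- Let g : 𝕋 × 𝕋 → ℝ be continuous with 0 < a ≤ g ≤ b. Then there exist positive continuous functions ρ¹, ρ² : 𝕋 → ℝ such that ρ¹(x₁) = ∫ g(x₁,x₂)/ρ²(x₂) dx₂ and ρ²(x₂) = ∫ g(x₁,x₂)/ρ¹(x₁) dx₁ for all x₁, x₂ ∈ 𝕋. -/
open MeasureTheory Real Function Set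

namespace ABFWork

noncomputable section

local notation "𝕋" => UnitAddCircle




instance : IsProbabilityMeasure (volume : Measure UnitAddCircle) :=
  ⟨by simp⟩

instance : Nonempty UnitAddCircle := ⟨0⟩

lemma cont_integrable {f : 𝕋 → ℝ} (hf : Continuous f) : Integrable f :=
  hf.integrable_of_hasCompactSupport (isClosed_tsupport _).isCompact

lemma integral_ge {f : 𝕋 → ℝ} (hf : Continuous f) {e : ℝ} (he : ∀ x, e ≤ f x) :
    e ≤ ∫ x, f x := by
  have := integral_mono (integrable_const e) (cont_integrable hf) he
  simpa using this

lemma integral_le {f : 𝕋 → ℝ} (hf : Continuous f) {e : ℝ} (he : ∀ x, f x ≤ e) :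
    (∫ x, f x) ≤ e := by
  have := integral_mono (cont_integrable hf) (integrable_const e) he
  simpa using this

lemma Ipos2 {K φ : 𝕋 → ℝ} (hK : Continuous K) (hφ : Continuous φ) {a : ℝ} (ha : 0 < a)
    (hKa : ∀ x, a ≤ K x) (hφ0 : ∀ x, 0 < φ x) : 0 < ∫ x, K x * φ x := by
  obtain ⟨x₀, -, hx₀'⟩ := isCompact_univ.exists_isMinOn univ_nonempty hφ.continuousOn
  have hx₀ : ∀ t, φ x₀ ≤ φ t := fun t => isMinOn_iff.1 hx₀' t (mem_univ t)
  refine lt_of_lt_of_le (by have := hφ0 x₀; positivity : (0:ℝ) < a * φ x₀)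
    (integral_ge (hK.mul hφ) ?_)
  intro t
  have h1 := hx₀ t
  have h2 := hKa t
  have h3 := hφ0 t
  have h4 := hφ0 x₀
  simp only [Pi.mul_apply]
  nlinarith

/-! ### Oscillation -/

def osc (f : 𝕋 → ℝ) : ℝ := sSup (range f) - sInf (range f)

lemma sub_le_osc {f : 𝕋 → ℝ} (hf : Continuous f) (x y : 𝕋) : f x - f y ≤ osc f :=
  sub_le_sub (le_csSup (isCompact_range hf).bddAbove ⟨x, rfl⟩)
    (csInf_le (isCompact_range hf).bddBelow ⟨y, rfl⟩)

lemma osc_le {f : 𝕋 → ℝ} (hf : Continuous f) {C : ℝ} (h : ∀ x y, f x - f y ≤ C) :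
    osc f ≤ C := by
  obtain ⟨x, -, hx⟩ := isCompact_univ.exists_isMaxOn univ_nonempty hf.continuousOn
  obtain ⟨y, -, hy⟩ := isCompact_univ.exists_isMinOn univ_nonempty hf.continuousOn
  have h1 : sSup (range f) ≤ f x := csSup_le (range_nonempty f)
    (by rintro _ ⟨z, rfl⟩; exact isMaxOn_iff.1 hx z (mem_univ z))
  have h2 : f y ≤ sInf (range f) := le_csInf (range_nonempty f)
    (by rintro _ ⟨z, rfl⟩; exact isMinOn_iff.1 hy z (mem_univ z))
  have := h x y
  unfold osc
  linarith

lemma osc_nonneg {f : 𝕋 → ℝ} (hf : Continuous f) : 0 ≤ osc f := by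
  have := sub_le_osc hf 0 0; linarith

lemma osc_eq_of {f h : 𝕋 → ℝ} (hf : Continuous f) (hh : Continuous h)
    (e : ∀ x y, f x - f y = h x - h y) : osc f = osc h := by
  refine le_antisymm (osc_le hf fun x y => ?_) (osc_le hh fun x y => ?_)
  · rw [e x y]; exact sub_le_osc hh x y
  · rw [← e x y]; exact sub_le_osc hf x y

lemma osc_sub_comm {u u' : 𝕋 → ℝ} (hu : Continuous u) (hu' : Continuous u') :
    osc (fun x => u x - u' x) = osc (fun x => u' x - u x) := by
  refine le_antisymm (osc_le (hu.sub hu') fun x y => ?_) (osc_le (hu'.sub hu) fun x y => ?_)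
  · have := sub_le_osc (f := fun x => u' x - u x) (hu'.sub hu) y x; simp only [Pi.sub_apply] at this ⊢; linarith
  · have := sub_le_osc (f := fun x => u x - u' x) (hu.sub hu') y x; simp only [Pi.sub_apply] at this ⊢; linarith

lemma osc_sub_le {p q : 𝕋 → ℝ} (hp : Continuous p) (hq : Continuous q) :
    osc (fun x => p x - q x) ≤ osc p + osc q := by
  refine osc_le (hp.sub hq) fun x y => ?_
  have h1 := sub_le_osc hp x y
  have h2 := sub_le_osc hq y x
  simp only [Pi.sub_apply]
  linarith





/-- Two point Jensen for concavity of `x ^ θ`. -/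
lemma hoelder2 {s t T : ℝ} (hs0 : 0 < s) (hs1 : s ≤ 1) (ht : 0 ≤ t) (htT : t ≤ T)
    (hT : 0 < T) :
    Real.log (s + (1 - s) * Real.exp t) ≤ (t / T) * Real.log (s + (1 - s) * Real.exp T) := by
  set θ := t / T with hθdef
  have hθ0 : 0 ≤ θ := div_nonneg ht hT.le
  have hθ1 : θ ≤ 1 := (div_le_one hT).mpr htT
  have hs1' : 0 ≤ 1 - s := by linarith
  have hTθ : T * θ = t := by rw [hθdef]; field_simp
  have hE : Real.exp t = (Real.exp T) ^ θ := by rw [← hTθ, Real.exp_mul]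
  have hcc := Real.concaveOn_rpow hθ0 hθ1
  have hj := hcc.2 (x := 1) (Set.mem_Ici.2 zero_le_one)
    (y := Real.exp T) (Set.mem_Ici.2 (Real.exp_pos T).le) hs0.le hs1' (by ring)
  simp only [smul_eq_mul, Real.one_rpow, mul_one] at hj
  have harg : s + (1 - s) * Real.exp t ≤ (s + (1 - s) * Real.exp T) ^ θ := by
    rw [hE]; convert hj using 2 <;> ring
  have hpos : 0 < s + (1 - s) * Real.exp t := by positivity
  calc Real.log (s + (1 - s) * Real.exp t) ≤ Real.log ((s + (1 - s) * Real.exp T) ^ θ) :=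
        Real.log_le_log hpos harg
    _ = θ * Real.log (s + (1 - s) * Real.exp T) := Real.log_rpow (by positivity) θ


lemma osc_inf_le {f : UnitAddCircle → ℝ} (hf : Continuous f) (x : UnitAddCircle) :
    sInf (Set.range f) ≤ f x :=
  csInf_le (isCompact_range hf).bddBelow ⟨x, rfl⟩

lemma osc_le_sup {f : UnitAddCircle → ℝ} (hf : Continuous f) (x : UnitAddCircle) :
    f x ≤ sSup (Set.range f) :=
  le_csSup (isCompact_range hf).bddAbove ⟨x, rfl⟩

lemma osc_eq_sup_inf (f : UnitAddCircle → ℝ) : osc f = sSup (Set.range f) - sInf (Set.range f) := rfl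



lemma key_ineq {a b : ℝ} (ha : 0 < a) (hab : a ≤ b)
    {K K' φ p : 𝕋 → ℝ} (hK : Continuous K) (hK' : Continuous K')
    (hφ : Continuous φ) (hp : Continuous p)
    (hKa : ∀ x, a ≤ K x) (hKb : ∀ x, K x ≤ b)
    (hK'a : ∀ x, a ≤ K' x) (hK'b : ∀ x, K' x ≤ b)
    (hφ0 : ∀ x, 0 < φ x) (hp1 : ∀ x, 1 ≤ p x) {P : ℝ} (hpP : ∀ x, p x ≤ P) :
    Real.log (∫ x, K x * φ x * p x) - Real.log (∫ x, K x * φ x)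
      - (Real.log (∫ x, K' x * φ x * p x) - Real.log (∫ x, K' x * φ x))
      ≤ Real.log ((a/b)^2 + (1-(a/b)^2) * P) := by
  have hb : 0 < b := lt_of_lt_of_le ha hab
  set c : ℝ := a / b with hc
  have hc0 : 0 < c := div_pos ha hb
  have hc1 : c ≤ 1 := (div_le_one hb).mpr hab
  have hcb : c * b = a := by rw [hc]; field_simp
  have hP1 : 1 ≤ P := le_trans (hp1 0) (hpP 0)
  have hKφ : Continuous fun x => K x * φ x := hK.mul hφ
  have hK'φ : Continuous fun x => K' x * φ x := hK'.mul hφ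
  have hKφp : Continuous fun x => K x * φ x * p x := hKφ.mul hp
  have hK'φp : Continuous fun x => K' x * φ x * p x := hK'φ.mul hp
  set Z : ℝ := ∫ x, K x * φ x with hZ
  set Z' : ℝ := ∫ x, K' x * φ x with hZ'
  set A : ℝ := ∫ x, K x * φ x * p x with hA
  set B : ℝ := ∫ x, K' x * φ x * p x with hB
  have hφp0 : ∀ x, 0 < φ x * p x := fun x => mul_pos (hφ0 x) (lt_of_lt_of_le one_pos (hp1 x))
  have hZpos : 0 < Z := Ipos2 hK hφ ha hKa hφ0
  have hZ'pos : 0 < Z' := Ipos2 hK' hφ ha hK'a hφ0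
  have hApos : 0 < A := by
    have := Ipos2 hK (hφ.mul hp) ha hKa hφp0
    simpa only [hA, mul_assoc, Pi.mul_apply] using this
  have hBpos : 0 < B := by
    have := Ipos2 hK' (hφ.mul hp) ha hK'a hφp0
    simpa only [hB, mul_assoc, Pi.mul_apply] using this
  -- c * Z ≤ Z'
  have hZb : Z ≤ b * ∫ x, φ x := by
    rw [← integral_const_mul]
    exact integral_mono (cont_integrable hKφ) (cont_integrable (continuous_const.mul hφ))
      (fun x => mul_le_mul_of_nonneg_right (hKb x) (hφ0 x).le)
  have hZ'a : a * (∫ x, φ x) ≤ Z' := by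
    rw [← integral_const_mul]
    exact integral_mono (cont_integrable (continuous_const.mul hφ)) (cont_integrable hK'φ)
      (fun x => mul_le_mul_of_nonneg_right (hK'a x) (hφ0 x).le)
  have hcZ : c * Z ≤ Z' := by
    have h := mul_le_mul_of_nonneg_left hZb hc0.le
    nlinarith
  -- pointwise bracket nonneg
  have hbr : ∀ x, 0 ≤ Z' * (K x * φ x) - c^2 * Z * (K' x * φ x) := by
    intro x
    have h1 : c * K' x ≤ K x := by
      have h2 : c * K' x ≤ c * b := mul_le_mul_of_nonneg_left (hK'b x) hc0.le
      have := hKa x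
      linarith
    have h2 : (c * Z) * (c * K' x * φ x) ≤ Z' * (K x * φ x) :=
      mul_le_mul hcZ (mul_le_mul_of_nonneg_right h1 (hφ0 x).le)
        (mul_nonneg (mul_nonneg hc0.le (le_trans ha.le (hK'a x))) (hφ0 x).le) hZ'pos.le
    nlinarith
  have hbrC : Continuous fun x => Z' * (K x * φ x) - c^2 * Z * (K' x * φ x) :=
    (continuous_const.mul hKφ).sub (continuous_const.mul hK'φ)
  -- integral estimate
  have hint : Z' * A - c^2 * Z * B ≤ (Z' * Z - c^2 * Z * Z') * P := by
    have hmono : (∫ x, (Z' * (K x * φ x) - c^2 * Z * (K' x * φ x)) * p x)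
        ≤ ∫ x, (Z' * (K x * φ x) - c^2 * Z * (K' x * φ x)) * P :=
      integral_mono (cont_integrable (hbrC.mul hp)) (cont_integrable (hbrC.mul continuous_const))
        (fun x => mul_le_mul_of_nonneg_left (hpP x) (hbr x))
    have e1 : (∫ x, (Z' * (K x * φ x) - c^2 * Z * (K' x * φ x)) * p x)
        = Z' * A - c^2 * Z * B := by
      have e : ∀ x, (Z' * (K x * φ x) - c^2 * Z * (K' x * φ x)) * p x
          = Z' * (K x * φ x * p x) - (c^2 * Z) * (K' x * φ x * p x) := fun x => by ring
      simp only [e]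
      rw [integral_sub ((cont_integrable hKφp).const_mul _)
        ((cont_integrable hK'φp).const_mul _), integral_const_mul, integral_const_mul, ← hA, ← hB]
    have e2 : (∫ x, (Z' * (K x * φ x) - c^2 * Z * (K' x * φ x)) * P)
        = (Z' * Z - c^2 * Z * Z') * P := by
      have e : ∀ x, (Z' * (K x * φ x) - c^2 * Z * (K' x * φ x)) * P
          = (Z' * P) * (K x * φ x) - (c^2 * Z * P) * (K' x * φ x) := fun x => by ring
      simp only [e]
      rw [integral_sub ((cont_integrable hKφ).const_mul _)
        ((cont_integrable hK'φ).const_mul _), integral_const_mul, integral_const_mul, ← hZ, ← hZ']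
      ring
    rw [e1, e2] at hmono
    exact hmono
  -- Z' ≤ B
  have hZ'B : Z' ≤ B :=
    integral_mono (cont_integrable hK'φ) (cont_integrable hK'φp)
      (fun x => le_mul_of_one_le_right
        (mul_nonneg (le_trans ha.le (hK'a x)) (hφ0 x).le) (hp1 x))
  have hc2 : 0 ≤ 1 - c^2 := by nlinarith
  -- main multiplicative inequality
  have hmain : Z' * A ≤ (c^2 + (1 - c^2) * P) * (Z * B) := by
    nlinarith [mul_le_mul_of_nonneg_left hZ'B
      (mul_nonneg (mul_nonneg hc2 (by linarith : (0:ℝ) ≤ P)) hZpos.le)]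
  have hR : 0 < c^2 + (1 - c^2) * P := by nlinarith
  have hlog := Real.log_le_log (by positivity) hmain
  rw [Real.log_mul hZ'pos.ne' hApos.ne', Real.log_mul hR.ne' (by positivity),
    Real.log_mul hZpos.ne' hBpos.ne'] at hlog
  linarith



structure Pack where
  a : ℝ
  b : ℝ
  g : 𝕋 × 𝕋 → ℝ
  ha : 0 < a
  hab : a ≤ b
  hg : Continuous g
  hga : ∀ p, a ≤ g p
  hgb : ∀ p, g p ≤ b

def Pack.swap (P : Pack) : Pack :=
  ⟨P.a, P.b, fun p => P.g (p.2, p.1), P.ha, P.hab,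
    P.hg.comp (continuous_snd.prodMk continuous_fst),
    fun p => P.hga (p.2, p.1), fun p => P.hgb (p.2, p.1)⟩

def J (P : Pack) (u : 𝕋 → ℝ) (y : 𝕋) : ℝ := ∫ x, P.g (x, y) * Real.exp (-(u x))

lemma J_cont (P : Pack) {u : 𝕋 → ℝ} (hu : Continuous u) : Continuous (J P u) := by
  have hc : Continuous (Function.uncurry fun (y x : 𝕋) => P.g (x, y) * Real.exp (-(u x))) := by
    apply Continuous.mul
    · exact P.hg.comp (continuous_snd.prodMk continuous_fst)
    · exact (Real.continuous_exp.comp (hu.comp continuous_snd).neg)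
  have := continuous_parametric_integral_of_continuous (μ := (volume : Measure 𝕋)) hc isCompact_univ
  simp only [setIntegral_univ] at this; exact this

lemma J_pos (P : Pack) {u : 𝕋 → ℝ} (hu : Continuous u) (y : 𝕋) : 0 < J P u y :=
  Ipos2 (P.hg.comp (continuous_id.prodMk continuous_const))
    (Real.continuous_exp.comp hu.neg) P.ha (fun x => P.hga (x, y))
    (fun x => Real.exp_pos _)



lemma hb_pos (P : Pack) : 0 < P.b := lt_of_lt_of_le P.ha P.hab

lemma logJ_cont (P : Pack) {u : 𝕋 → ℝ} (hu : Continuous u) :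
    Continuous fun y => Real.log (J P u y) :=
  (J_cont P hu).log fun y => (J_pos P hu y).ne'

lemma phi_pt (P : Pack) {u u' : 𝕋 → ℝ} (hu : Continuous u) (hu' : Continuous u')
    {m M : ℝ} (hm : ∀ x, m ≤ u' x - u x) (hM : ∀ x, u' x - u x ≤ M) (y y' : 𝕋) :
    (Real.log (J P u y) - Real.log (J P u' y))
      - (Real.log (J P u y') - Real.log (J P u' y'))
      ≤ Real.log ((P.a/P.b)^2 + (1-(P.a/P.b)^2) * Real.exp (M - m)) := by
  have hgc : ∀ z : 𝕋, Continuous fun x => P.g (x, z) :=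
    fun z => P.hg.comp (continuous_id.prodMk continuous_const)
  have hφc : Continuous fun x => Real.exp (-(u' x)) := Real.continuous_exp.comp hu'.neg
  have hpc : Continuous fun x => Real.exp (u' x - u x - m) :=
    Real.continuous_exp.comp ((hu'.sub hu).sub continuous_const)
  have hkey := key_ineq P.ha P.hab (K := fun x => P.g (x, y)) (K' := fun x => P.g (x, y'))
    (φ := fun x => Real.exp (-(u' x))) (p := fun x => Real.exp (u' x - u x - m))
    (hgc y) (hgc y') hφc hpc
    (fun x => P.hga (x, y)) (fun x => P.hgb (x, y))
    (fun x => P.hga (x, y')) (fun x => P.hgb (x, y'))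
    (fun x => Real.exp_pos _)
    (fun x => Real.one_le_exp (by linarith [hm x]))
    (P := Real.exp (M - m)) (fun x => Real.exp_le_exp.mpr (by linarith [hM x]))
  have hexp : ∀ z : 𝕋, ∀ x : 𝕋,
      P.g (x, z) * Real.exp (-(u x))
        = Real.exp m * (P.g (x, z) * Real.exp (-(u' x)) * Real.exp (u' x - u x - m)) := by
    intro z x
    have h1 : Real.exp m * (Real.exp (-(u' x)) * Real.exp (u' x - u x - m))
        = Real.exp (-(u x)) := by
      rw [← Real.exp_add, ← Real.exp_add]; congr 1; ring
    rw [← h1]; ring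
  have hJy : J P u y
      = Real.exp m * ∫ x, P.g (x, y) * Real.exp (-(u' x)) * Real.exp (u' x - u x - m) := by
    unfold J
    simp only [hexp y]
    rw [integral_const_mul]
  have hJy' : J P u y'
      = Real.exp m * ∫ x, P.g (x, y') * Real.exp (-(u' x)) * Real.exp (u' x - u x - m) := by
    unfold J
    simp only [hexp y']
    rw [integral_const_mul]
  have hApos : 0 < ∫ x, P.g (x, y) * Real.exp (-(u' x)) * Real.exp (u' x - u x - m) := by
    have h := J_pos P hu y
    rw [hJy] at h
    nlinarith [Real.exp_pos m]
  have hBpos : 0 < ∫ x, P.g (x, y') * Real.exp (-(u' x)) * Real.exp (u' x - u x - m) := by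
    have h := J_pos P hu y'
    rw [hJy'] at h
    nlinarith [Real.exp_pos m]
  have hZ : J P u' y = ∫ x, P.g (x, y) * Real.exp (-(u' x)) := rfl
  have hZ' : J P u' y' = ∫ x, P.g (x, y') * Real.exp (-(u' x)) := rfl
  rw [hJy, hJy', hZ, hZ', Real.log_mul (Real.exp_ne_zero m) hApos.ne',
    Real.log_mul (Real.exp_ne_zero m) hBpos.ne', Real.log_exp]
  linarith [hkey]

lemma phi_osc_le (P : Pack) {v : 𝕋 → ℝ} (hv : Continuous v) :
    osc (fun y => Real.log (J P v y)) ≤ Real.log (P.b / P.a) := by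
  have hb := hb_pos P
  refine osc_le (logJ_cont P hv) fun y y' => ?_
  have hratio : J P v y ≤ (P.b / P.a) * J P v y' := by
    rw [J, J, ← integral_const_mul]
    refine integral_mono (cont_integrable ?_) (cont_integrable ?_) ?_
    · exact (P.hg.comp (continuous_id.prodMk continuous_const)).mul
        (Real.continuous_exp.comp hv.neg)
    · exact continuous_const.mul ((P.hg.comp (continuous_id.prodMk continuous_const)).mul
        (Real.continuous_exp.comp hv.neg))
    · intro x
      have h1 : P.g (x, y) ≤ P.b / P.a * P.g (x, y') := by
        have h2 := P.hga (x, y')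
        have h3 := P.hgb (x, y)
        have h4 : P.b / P.a * P.a = P.b := div_mul_cancel₀ _ P.ha.ne'
        nlinarith [div_pos hb P.ha]
      have h5 := mul_le_mul_of_nonneg_right h1 (Real.exp_pos (-(v x))).le
      simpa [mul_assoc] using h5
  have := Real.log_le_log (J_pos P hv y) hratio
  rw [Real.log_mul (div_pos hb P.ha).ne' (J_pos P hv y').ne'] at this
  linarith

lemma phi_contract (P : Pack) {u u' : 𝕋 → ℝ} (hu : Continuous u) (hu' : Continuous u')
    {T : ℝ} (hT : 0 < T) (hosc : osc (fun x => u x - u' x) ≤ T) :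
    osc (fun y => Real.log (J P u y) - Real.log (J P u' y))
      ≤ (Real.log ((P.a/P.b)^2 + (1-(P.a/P.b)^2) * Real.exp T) / T)
          * osc (fun x => u x - u' x) := by
  have hb := hb_pos P
  set w : 𝕋 → ℝ := fun x => u' x - u x with hw
  have hwc : Continuous w := hu'.sub hu
  set m : ℝ := sInf (range w) with hm'
  set M : ℝ := sSup (range w) with hM'
  have hm : ∀ x, m ≤ w x := fun x => osc_inf_le hwc x
  have hM : ∀ x, w x ≤ M := fun x => osc_le_sup hwc x
  have hosc_w : osc (fun x => u x - u' x) = M - m := by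
    rw [osc_sub_comm hu hu', ← hw, osc_eq_sup_inf]
  have hMm0 : 0 ≤ M - m := by
    rw [← hosc_w]; exact osc_nonneg (hu.sub hu')
  have hMmT : M - m ≤ T := by rw [← hosc_w]; exact hosc
  have hs0 : 0 < (P.a/P.b)^2 := pow_pos (div_pos P.ha hb) 2
  have hs1 : (P.a/P.b)^2 ≤ 1 := by
    have : P.a / P.b ≤ 1 := (div_le_one hb).mpr P.hab
    nlinarith [div_pos P.ha hb]
  refine osc_le ((logJ_cont P hu).sub (logJ_cont P hu')) fun y y' => ?_
  calc Real.log (J P u y) - Real.log (J P u' y)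
        - (Real.log (J P u y') - Real.log (J P u' y'))
      ≤ Real.log ((P.a/P.b)^2 + (1-(P.a/P.b)^2) * Real.exp (M - m)) :=
        phi_pt P hu hu' hm hM y y'
    _ ≤ ((M - m) / T) * Real.log ((P.a/P.b)^2 + (1-(P.a/P.b)^2) * Real.exp T) :=
        hoelder2 hs0 hs1 hMm0 hMmT hT
    _ = (Real.log ((P.a/P.b)^2 + (1-(P.a/P.b)^2) * Real.exp T) / T)
          * osc (fun x => u x - u' x) := by rw [hosc_w]; ring

/-! ### The continuous-map layer -/

def PhiC (P : Pack) (u : C(𝕋, ℝ)) : C(𝕋, ℝ) :=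
  ⟨fun y => Real.log (J P u y), logJ_cont P u.continuous⟩

def TC (P : Pack) (u : C(𝕋, ℝ)) : C(𝕋, ℝ) := PhiC P.swap (PhiC P u)

def ThatC (P : Pack) (u : C(𝕋, ℝ)) : C(𝕋, ℝ) :=
  TC P u - ContinuousMap.const 𝕋 (TC P u 0)

def Del (P : Pack) : ℝ := Real.log (P.b / P.a)

def Tcap (P : Pack) : ℝ := 2 * Del P + 1

def lam (P : Pack) : ℝ :=
  Real.log ((P.a/P.b)^2 + (1-(P.a/P.b)^2) * Real.exp (Tcap P)) / Tcap P

lemma Del_nonneg (P : Pack) : 0 ≤ Del P :=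
  Real.log_nonneg ((one_le_div P.ha).mpr P.hab)

lemma Tcap_pos (P : Pack) : 0 < Tcap P := by
  have := Del_nonneg P; unfold Tcap; linarith

lemma s_pos (P : Pack) : 0 < (P.a/P.b)^2 := pow_pos (div_pos P.ha (hb_pos P)) 2

lemma s_le_one (P : Pack) : (P.a/P.b)^2 ≤ 1 := by
  have h : P.a / P.b ≤ 1 := (div_le_one (hb_pos P)).mpr P.hab
  nlinarith [div_pos P.ha (hb_pos P)]

lemma lam_nonneg (P : Pack) : 0 ≤ lam P := by
  refine div_nonneg (Real.log_nonneg ?_) (Tcap_pos P).le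
  nlinarith [Real.one_le_exp (Tcap_pos P).le, s_pos P, s_le_one P]

lemma lam_lt_one (P : Pack) : lam P < 1 := by
  rw [lam, div_lt_one (Tcap_pos P)]
  have hE : 1 < Real.exp (Tcap P) := by
    have := Real.add_one_le_exp (Tcap P)
    have := Tcap_pos P
    linarith
  have h1 : (P.a/P.b)^2 + (1-(P.a/P.b)^2) * Real.exp (Tcap P) < Real.exp (Tcap P) := by
    nlinarith [s_pos P]
  have h0 : 0 < (P.a/P.b)^2 + (1-(P.a/P.b)^2) * Real.exp (Tcap P) := by
    nlinarith [s_pos P, s_le_one P, Real.exp_pos (Tcap P)]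
  calc Real.log ((P.a/P.b)^2 + (1-(P.a/P.b)^2) * Real.exp (Tcap P))
      < Real.log (Real.exp (Tcap P)) := Real.log_lt_log h0 h1
    _ = Tcap P := Real.log_exp _

lemma osc_TC_le (P : Pack) (u : C(𝕋, ℝ)) : osc (fun y => TC P u y) ≤ Del P :=
  phi_osc_le P.swap (PhiC P u).continuous

lemma osc_TC_sub_le (P : Pack) (u u' : C(𝕋, ℝ)) :
    osc (fun y => TC P u y - TC P u' y) ≤ 2 * Del P := by
  have h := osc_sub_le (p := fun y => TC P u y) (q := fun y => TC P u' y)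
    (TC P u).continuous (TC P u').continuous
  have h1 := osc_TC_le P u
  have h2 := osc_TC_le P u'
  linarith

lemma TC_contract (P : Pack) (u u' : C(𝕋, ℝ))
    (hosc : osc (fun t => u t - u' t) ≤ Tcap P) :
    osc (fun y => TC P u y - TC P u' y) ≤ lam P * osc (fun t => u t - u' t) := by
  have h0 : 0 ≤ osc (fun t => u t - u' t) :=
    osc_nonneg (f := fun t => u t - u' t) (u.continuous.sub u'.continuous)
  have h1 : osc (fun y => PhiC P u y - PhiC P u' y) ≤ lam P * osc (fun t => u t - u' t) :=
    phi_contract P u.continuous u'.continuous (Tcap_pos P) hosc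
  have h1' : osc (fun y => PhiC P u y - PhiC P u' y) ≤ Tcap P := by
    nlinarith [lam_nonneg P, lam_lt_one P]
  have h2 : osc (fun y => TC P u y - TC P u' y)
      ≤ lam P * osc (fun y => PhiC P u y - PhiC P u' y) :=
    phi_contract P.swap (PhiC P u).continuous (PhiC P u').continuous (Tcap_pos P) h1'
  have hΦ0 : 0 ≤ osc (fun y => PhiC P u y - PhiC P u' y) :=
    osc_nonneg (f := fun y => PhiC P u y - PhiC P u' y)
      ((PhiC P u).continuous.sub (PhiC P u').continuous)
  have h3 := mul_le_mul_of_nonneg_left h1 (lam_nonneg P)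
  have h6 : 0 ≤ 1 - lam P := by linarith [lam_lt_one P]
  nlinarith [mul_nonneg (lam_nonneg P) h0, mul_nonneg h6 (mul_nonneg (lam_nonneg P) h0)]

/-- norm of a pinned continuous map is bounded by its oscillation -/
lemma norm_le_osc (w : C(𝕋, ℝ)) (h0 : w 0 = 0) : ‖w‖ ≤ osc (fun y => w y) := by
  refine (ContinuousMap.norm_le _ (osc_nonneg (f := fun y => w y) w.continuous)).mpr fun t => ?_
  rw [Real.norm_eq_abs]
  refine abs_le.mpr ⟨?_, ?_⟩
  · have := sub_le_osc (f := fun y => w y) w.continuous 0 t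
    rw [h0] at this; linarith
  · have := sub_le_osc (f := fun y => w y) w.continuous t 0
    rw [h0] at this; linarith

lemma osc_le_two_dist (u u' : C(𝕋, ℝ)) :
    osc (fun t => u t - u' t) ≤ 2 * dist u u' := by
  refine osc_le (f := fun t => u t - u' t) (u.continuous.sub u'.continuous) fun s t => ?_
  have h1 : ∀ z : 𝕋, |u z - u' z| ≤ dist u u' := fun z => by
    rw [← Real.dist_eq]; exact ContinuousMap.dist_apply_le_dist z
  have hx := abs_le.mp (h1 s)
  have hy := abs_le.mp (h1 t)
  show u s - u' s - (u t - u' t) ≤ 2 * dist u u'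
  linarith [hx.2, hy.1]

/-! ### Main existence lemma -/

lemma main_exists (P : Pack) :
    ∃ ρ1 ρ2 : 𝕋 → ℝ,
      Continuous ρ1 ∧ Continuous ρ2 ∧
      (∀ t, 0 < ρ1 t) ∧ (∀ t, 0 < ρ2 t) ∧
      (∀ x₁, ρ1 x₁ = ∫ x₂ : 𝕋, P.g (x₁, x₂) / ρ2 x₂) ∧
      (∀ x₂, ρ2 x₂ = ∫ x₁ : 𝕋, P.g (x₁, x₂) / ρ1 x₁) := by
  classical
  set F : C(𝕋, ℝ) → C(𝕋, ℝ) := ThatC P with hF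
  have hF0 : ∀ u : C(𝕋, ℝ), F u 0 = 0 := fun u => by
    simp [hF, ThatC]
  have hThatTC : ∀ u u' : C(𝕋, ℝ),
      osc (fun y => F u y - F u' y) = osc (fun y => TC P u y - TC P u' y) := by
    intro u u'
    refine osc_eq_of (f := fun y => F u y - F u' y) (h := fun y => TC P u y - TC P u' y)
      ((F u).continuous.sub (F u').continuous)
      ((TC P u).continuous.sub (TC P u').continuous) fun s t => ?_
    simp only [hF, ThatC, ContinuousMap.sub_apply, ContinuousMap.const_apply]
    ring
  have hstep : ∀ u u' : C(𝕋, ℝ), osc (fun y => F u y - F u' y) ≤ 2 * Del P := by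
    intro u u'; rw [hThatTC u u']; exact osc_TC_sub_le P u u'
  have hcontract : ∀ u u' : C(𝕋, ℝ), osc (fun t => u t - u' t) ≤ Tcap P →
      osc (fun y => F u y - F u' y) ≤ lam P * osc (fun t => u t - u' t) := by
    intro u u' h; rw [hThatTC u u']; exact TC_contract P u u' h
  have hbase : ∀ u u' : C(𝕋, ℝ), osc (fun y => F u y - F u' y) ≤ 2 * dist u u' := by
    intro u u'
    by_cases hc : osc (fun t => u t - u' t) ≤ Tcap P
    · have h1 := hcontract u u' hc
      have h2 := osc_le_two_dist u u'
      have h0 : 0 ≤ osc (fun t => u t - u' t) :=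
        osc_nonneg (f := fun t => u t - u' t) (u.continuous.sub u'.continuous)
      nlinarith [lam_nonneg P, lam_lt_one P]
    · push_neg at hc
      have h2 := osc_le_two_dist u u'
      have h3 := hstep u u'
      have h4 := Tcap_pos P
      unfold Tcap at hc
      linarith
  have hiter : ∀ (n : ℕ) (u u' : C(𝕋, ℝ)),
      osc (fun y => F^[n+1] u y - F^[n+1] u' y) ≤ lam P ^ n * (2 * dist u u') := by
    intro n
    induction n with
    | zero => intro u u'; simpa using hbase u u'
    | succ k ih =>
      intro u u'
      have hprev : osc (fun t => F^[k+1] u t - F^[k+1] u' t) ≤ Tcap P := by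
        rw [Function.iterate_succ_apply' F k u, Function.iterate_succ_apply' F k u']
        have := hstep (F^[k] u) (F^[k] u')
        have hD := Del_nonneg P
        unfold Tcap
        linarith
      rw [Function.iterate_succ_apply' F (k+1) u, Function.iterate_succ_apply' F (k+1) u']
      have h1 := hcontract (F^[k+1] u) (F^[k+1] u') hprev
      have h2 := ih u u'
      have h3 := lam_nonneg P
      calc osc (fun y => F (F^[k+1] u) y - F (F^[k+1] u') y)
          ≤ lam P * osc (fun t => F^[k+1] u t - F^[k+1] u' t) := h1
        _ ≤ lam P * (lam P ^ k * (2 * dist u u')) := mul_le_mul_of_nonneg_left h2 h3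
        _ = lam P ^ (k+1) * (2 * dist u u') := by ring
  have hdist : ∀ (n : ℕ) (u u' : C(𝕋, ℝ)),
      dist (F^[n+1] u) (F^[n+1] u') ≤ lam P ^ n * (2 * dist u u') := by
    intro n u u'
    rw [dist_eq_norm]
    have h0 : (F^[n+1] u - F^[n+1] u') 0 = 0 := by
      rw [ContinuousMap.sub_apply, Function.iterate_succ_apply' F n u,
        Function.iterate_succ_apply' F n u', hF0, hF0, sub_zero]
    exact le_trans (norm_le_osc _ h0) (hiter n u u')
  -- Banach fixed point for an iterate
  obtain ⟨N, hN⟩ := exists_pow_lt_of_lt_one (by norm_num : (0:ℝ) < 1/2) (lam_lt_one P)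
  have hlamN : 0 ≤ lam P ^ N * 2 := mul_nonneg (pow_nonneg (lam_nonneg P) N) (by norm_num)
  set Kc : NNReal := Real.toNNReal (lam P ^ N * 2) with hKc
  have hKle : (Kc : ℝ) = lam P ^ N * 2 := Real.coe_toNNReal _ hlamN
  have hK1 : Kc < 1 := by
    rw [← NNReal.coe_lt_coe, hKle, NNReal.coe_one]
    nlinarith [hN]
  have hLip : LipschitzWith Kc (F^[N+1]) := by
    refine LipschitzWith.of_dist_le_mul fun u u' => ?_
    rw [hKle]
    calc dist (F^[N+1] u) (F^[N+1] u') ≤ lam P ^ N * (2 * dist u u') := hdist N u u'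
      _ = lam P ^ N * 2 * dist u u' := by ring
  have hCW : ContractingWith Kc (F^[N+1]) := ⟨hK1, hLip⟩
  have hfixF : Function.IsFixedPt F (hCW.fixedPoint (F^[N+1])) :=
    hCW.isFixedPt_fixedPoint_iterate
  set uf : C(𝕋, ℝ) := hCW.fixedPoint (F^[N+1]) with huf
  have hfix : ThatC P uf = uf := hfixF
  -- the additive constant
  set v : 𝕋 → ℝ := fun y => Real.log (J P uf y) with hv
  have hvy : ∀ y, v y = Real.log (J P uf y) := fun _ => rfl
  have hvc : Continuous v := logJ_cont P uf.continuous
  set c₀ : ℝ := TC P uf 0 with hc₀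
  have hTCt : ∀ t, TC P uf t = uf t + c₀ := by
    intro t
    have h := ContinuousMap.congr_fun hfix t
    simp only [ThatC, ContinuousMap.sub_apply, ContinuousMap.const_apply] at h
    rw [hc₀]; linarith
  have hJswap_eq : ∀ t, J P.swap v t = Real.exp (uf t + c₀) := by
    intro t
    have h1 : J P.swap v t = Real.exp (Real.log (J P.swap v t)) :=
      (Real.exp_log (J_pos P.swap hvc t)).symm
    have h2 : Real.log (J P.swap v t) = TC P uf t := rfl
    rw [h1, h2, hTCt t]
  -- Fubini argument: the constant must vanish
  have hcont2 : Continuous (Function.uncurry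
      fun (x₁ y : 𝕋) => P.g (x₁, y) * Real.exp (-(uf x₁)) * Real.exp (-(v y))) :=
    ((P.hg.comp (continuous_fst.prodMk continuous_snd)).mul
      (Real.continuous_exp.comp (uf.continuous.comp continuous_fst).neg)).mul
      (Real.continuous_exp.comp (hvc.comp continuous_snd).neg)
  have hsupp2 : HasCompactSupport (Function.uncurry
      fun (x₁ y : 𝕋) => P.g (x₁, y) * Real.exp (-(uf x₁)) * Real.exp (-(v y))) :=
    (isClosed_tsupport _).isCompact
  have hswap := integral_integral_swap_of_hasCompactSupport (μ := (volume : Measure 𝕋)) (ν := (volume : Measure 𝕋)) hcont2 hsupp2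
  have hleft : ∀ x₁, (∫ y, P.g (x₁, y) * Real.exp (-(uf x₁)) * Real.exp (-(v y)))
      = Real.exp c₀ := by
    intro x₁
    have e : ∀ y, P.g (x₁, y) * Real.exp (-(uf x₁)) * Real.exp (-(v y))
        = P.g (x₁, y) * Real.exp (-(v y)) * Real.exp (-(uf x₁)) := fun y => by ring
    simp only [e]
    rw [integral_mul_const]
    have h3 : (∫ y, P.g (x₁, y) * Real.exp (-(v y))) = J P.swap v x₁ := rfl
    rw [h3, hJswap_eq x₁, ← Real.exp_add]
    congr 1; ring
  have hright : ∀ y, (∫ x₁, P.g (x₁, y) * Real.exp (-(uf x₁)) * Real.exp (-(v y)))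
      = 1 := by
    intro y
    rw [integral_mul_const]
    have h3 : (∫ x₁, P.g (x₁, y) * Real.exp (-(uf x₁))) = J P uf y := rfl
    rw [h3, hvy, Real.exp_neg, Real.exp_log (J_pos P uf.continuous y)]
    exact mul_inv_cancel₀ (J_pos P uf.continuous y).ne'
  have hec : Real.exp c₀ = 1 := by
    have h3 : (∫ x₁ : 𝕋, (∫ y, P.g (x₁, y) * Real.exp (-(uf x₁)) * Real.exp (-(v y))))
        = Real.exp c₀ := by simp only [hleft]; simp
    have h4 : (∫ y : 𝕋, (∫ x₁, P.g (x₁, y) * Real.exp (-(uf x₁)) * Real.exp (-(v y))))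
        = 1 := by simp only [hright]; simp
    rw [← h3, hswap, h4]
  have hc0 : c₀ = 0 := by simpa using hec
  have hTCu : ∀ t, TC P uf t = uf t := fun t => by rw [hTCt t, hc0, add_zero]
  -- assemble the solution
  refine ⟨fun t => Real.exp (uf t), fun y => J P uf y,
    Real.continuous_exp.comp uf.continuous, J_cont P uf.continuous,
    fun t => Real.exp_pos _, fun y => J_pos P uf.continuous y, ?_, ?_⟩
  · intro x₁
    have e : ∀ y, P.g (x₁, y) / J P uf y = P.g (x₁, y) * Real.exp (-(v y)) := by
      intro y
      rw [hvy, Real.exp_neg, Real.exp_log (J_pos P uf.continuous y), div_eq_mul_inv]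
    have h5 : (∫ y, P.g (x₁, y) / J P uf y) = J P.swap v x₁ := by
      simp only [e]; rfl
    rw [h5, hJswap_eq x₁, hc0, add_zero]
  · intro y
    have e : ∀ t, P.g (t, y) / Real.exp (uf t) = P.g (t, y) * Real.exp (-(uf t)) :=
      fun t => by rw [Real.exp_neg, div_eq_mul_inv]
    simp only [e]
    rfl

end
end ABFWork

open MeasureTheory

/-- Existence of a stationary state for the tensorized ABF
dynamics: the coupled fixed-point system has a positive continuous solution. -/
theorem abf_stationary_state_exists
    (a b : ℝ) (ha : 0 < a)
    (g : UnitAddCircle × UnitAddCircle → ℝ) (hg : Continuous g)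
    (hga : ∀ x₁ x₂, a ≤ g (x₁, x₂)) (hgb : ∀ x₁ x₂, g (x₁, x₂) ≤ b) :
    ∃ ρ1 ρ2 : UnitAddCircle → ℝ,
      Continuous ρ1 ∧ Continuous ρ2 ∧
      (∀ x, 0 < ρ1 x) ∧ (∀ x, 0 < ρ2 x) ∧
      (∀ x₁, ρ1 x₁ = ∫ x₂ : UnitAddCircle, g (x₁, x₂) / ρ2 x₂) ∧
      (∀ x₂, ρ2 x₂ = ∫ x₁ : UnitAddCircle, g (x₁, x₂) / ρ1 x₁) := by
  have hab : a ≤ b := le_trans (hga 0 0) (hgb 0 0)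
  exact ABFWork.main_exists ⟨a, b, g, ha, hab, hg, fun p => hga p.1 p.2, fun p => hgb p.1 p.2⟩
end

section
/- Let g : 𝕋 × 𝕋 → ℝ be continuous with 0 < a ≤ g ≤ b, and define the sequence ρₙ of continuous functions on 𝕋 by ρ₀ = 1 and ρₙ₊₁(x₁) = Zₙ₊₁ ∫ g(x₁,x₂) / (∫ g(y,x₂)/ρₙ(y) dy) dx₂ with Zₙ₊₁ chosen so that ∫ 1/ρₙ₊₁ = 1. Then the sequence (ρₙ) is uniformly bounded and equicontinuous, hence has a subsequence converging uniformly on 𝕋. -/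
open MeasureTheory

private lemma unitAddCircle_isProb : IsProbabilityMeasure (volume : Measure UnitAddCircle) :=
  ⟨by simp⟩

private lemma integrable_of_cont {f : UnitAddCircle → ℝ} (hf : Continuous f) :
    Integrable f :=
  hf.integrable_of_hasCompactSupport (HasCompactSupport.of_compactSpace f)

private lemma integrable_of_bound {f : UnitAddCircle → ℝ} (hf : Measurable f) (C : ℝ)
    (hC : ∀ x, |f x| ≤ C) : Integrable f := by
  haveI := unitAddCircle_isProb
  exact ⟨hf.aestronglyMeasurable, HasFiniteIntegral.of_bounded
    (C := C) (Filter.Eventually.of_forall (by simpa [Real.norm_eq_abs] using hC))⟩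

private lemma integral_const_prob (c : ℝ) : ∫ _ : UnitAddCircle, c = c := by
  haveI := unitAddCircle_isProb
  simp

/-- The fixed-point iterates of the tensorized ABF stationary
system are uniformly bounded and equicontinuous, hence admit a uniformly
convergent subsequence (Arzelà–Ascoli). -/
theorem abf_iterates_compact
    (a b : ℝ) (ha : 0 < a)
    (g : UnitAddCircle × UnitAddCircle → ℝ) (hg : Continuous g)
    (hga : ∀ x₁ x₂, a ≤ g (x₁, x₂)) (hgb : ∀ x₁ x₂, g (x₁, x₂) ≤ b)
    (ρ : ℕ → UnitAddCircle → ℝ) (hρcont : ∀ n, Continuous (ρ n))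
    (hρ0 : ∀ x, ρ 0 x = 1)
    (Z : ℕ → ℝ)
    (hrec : ∀ n x₁, ρ (n + 1) x₁ =
      Z (n + 1) * ∫ x₂ : UnitAddCircle,
        g (x₁, x₂) / (∫ y : UnitAddCircle, g (y, x₂) / ρ n y))
    (hnorm : ∀ n, ∫ x₁ : UnitAddCircle, 1 / ρ (n + 1) x₁ = 1) :
    (∃ M : ℝ, ∀ n x, |ρ n x| ≤ M) ∧
    Equicontinuous ρ ∧
    ∃ φ : ℕ → ℕ, StrictMono φ ∧
      ∃ f : UnitAddCircle → ℝ,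
        TendstoUniformly (fun n => ρ (φ n)) f Filter.atTop := by
  have hab : a ≤ b := le_trans (hga 0 0) (hgb 0 0)
  have hb : 0 < b := lt_of_lt_of_le ha hab
  -- The key one-step estimates.
  have step : ∀ n, (∀ x, 0 < ρ n x) →
      (∀ x, 0 < ρ (n + 1) x) ∧ (∀ x, a / b ≤ ρ (n + 1) x ∧ ρ (n + 1) x ≤ b / a) ∧
      (∀ ε, 0 ≤ ε → ∀ x x', (∀ x₂, |g (x, x₂) - g (x', x₂)| ≤ ε) →
        |ρ (n + 1) x - ρ (n + 1) x'| ≤ ε * (b / (a * a))) := by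
    intro n hpos
    obtain ⟨xm, -, hxm⟩ := isCompact_univ.exists_isMinOn Set.univ_nonempty
      (hρcont n).continuousOn
    obtain ⟨xM, -, hxM⟩ := isCompact_univ.exists_isMaxOn Set.univ_nonempty
      (hρcont n).continuousOn
    have hm : 0 < ρ n xm := hpos xm
    have hM : 0 < ρ n xM := hpos xM
    have hmle : ∀ y, ρ n xm ≤ ρ n y := fun y => hxm (Set.mem_univ y)
    have hMle : ∀ y, ρ n y ≤ ρ n xM := fun y => hxM (Set.mem_univ y)
    set D : UnitAddCircle → ℝ := fun x₂ => ∫ y : UnitAddCircle, g (y, x₂) / ρ n y with hDdef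
    have hDmeas : Measurable D := by
      have hc : Continuous (Function.uncurry fun x₂ y => g (y, x₂) / ρ n y) := by
        exact (hg.comp (continuous_snd.prodMk continuous_fst)).div
          ((hρcont n).comp continuous_snd) fun p => (hpos p.2).ne'
      exact hc.stronglyMeasurable.integral_prod_right.measurable
    have hDlb : ∀ x₂, a / ρ n xM ≤ D x₂ := by
      intro x₂
      have hint : Integrable (fun y => g (y, x₂) / ρ n y) :=
        integrable_of_cont ((hg.comp (continuous_id.prodMk continuous_const)).div
          (hρcont n) fun y => (hpos y).ne')
      calc a / ρ n xM = ∫ _ : UnitAddCircle, a / ρ n xM := (integral_const_prob _).symm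
        _ ≤ D x₂ := integral_mono (integrable_const _) hint fun y =>
            div_le_div₀ (le_trans ha.le (hga y x₂)) (hga y x₂) (hpos y) (hMle y)
    have hDub : ∀ x₂, D x₂ ≤ b / ρ n xm := by
      intro x₂
      have hint : Integrable (fun y => g (y, x₂) / ρ n y) :=
        integrable_of_cont ((hg.comp (continuous_id.prodMk continuous_const)).div
          (hρcont n) fun y => (hpos y).ne')
      calc D x₂ ≤ ∫ _ : UnitAddCircle, b / ρ n xm := integral_mono hint (integrable_const _)
            fun y => div_le_div₀ hb.le (hgb y x₂) hm (hmle y)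
        _ = b / ρ n xm := integral_const_prob _
    have hDpos : ∀ x₂, 0 < D x₂ := fun x₂ =>
      lt_of_lt_of_le (div_pos ha hM) (hDlb x₂)
    have hgmeas : ∀ x₁ : UnitAddCircle, Measurable fun x₂ => g (x₁, x₂) := fun x₁ =>
      (hg.comp (continuous_const.prodMk continuous_id)).measurable
    have hIint : ∀ x₁, Integrable (fun x₂ => g (x₁, x₂) / D x₂) := by
      intro x₁
      refine integrable_of_bound ((hgmeas x₁).div hDmeas) (b / (a / ρ n xM)) ?_
      intro x₂
      rw [abs_of_nonneg (div_nonneg (le_trans ha.le (hga x₁ x₂)) (hDpos x₂).le)]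
      exact div_le_div₀ hb.le (hgb x₁ x₂) (div_pos ha hM) (hDlb x₂)
    have hJint : Integrable (fun x₂ => 1 / D x₂) := by
      refine integrable_of_bound (measurable_const.div hDmeas) (1 / (a / ρ n xM)) ?_
      intro x₂
      rw [abs_of_nonneg (one_div_nonneg.2 (hDpos x₂).le)]
      exact div_le_div₀ zero_le_one le_rfl (div_pos ha hM) (hDlb x₂)
    set I : UnitAddCircle → ℝ := fun x₁ => ∫ x₂ : UnitAddCircle, g (x₁, x₂) / D x₂ with hIdef
    have hrec' : ∀ x₁, ρ (n + 1) x₁ = Z (n + 1) * I x₁ := fun x₁ => hrec n x₁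
    have hIpos : ∀ x₁, 0 < I x₁ := by
      intro x₁
      have h1 : a / (b / ρ n xm) ≤ I x₁ := by
        calc a / (b / ρ n xm) = ∫ _ : UnitAddCircle, a / (b / ρ n xm) :=
              (integral_const_prob _).symm
          _ ≤ I x₁ := integral_mono (integrable_const _) (hIint x₁) fun x₂ =>
              div_le_div₀ (le_trans ha.le (hga x₁ x₂)) (hga x₁ x₂) (hDpos x₂) (hDub x₂)
      exact lt_of_lt_of_le (div_pos ha (div_pos hb hm)) h1
    have hIratio : ∀ x x', a * I x ≤ b * I x' := by
      intro x x'
      have hpt : ∀ x₂, a * (g (x, x₂) / D x₂) ≤ b * (g (x', x₂) / D x₂) := by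
        intro x₂
        rw [← mul_div_assoc, ← mul_div_assoc]
        refine (div_le_div_iff_of_pos_right (hDpos x₂)).2 ?_
        have h1 := mul_le_mul_of_nonneg_left (hgb x x₂) ha.le
        have h2 := mul_le_mul_of_nonneg_left (hga x' x₂) hb.le
        linarith
      calc a * I x = ∫ x₂ : UnitAddCircle, a * (g (x, x₂) / D x₂) :=
            (integral_const_mul _ _).symm
        _ ≤ ∫ x₂ : UnitAddCircle, b * (g (x', x₂) / D x₂) :=
            integral_mono ((hIint x).const_mul a) ((hIint x').const_mul b) hpt
        _ = b * I x' := integral_const_mul _ _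
    have hZ : 0 < Z (n + 1) := by
      by_contra hZ
      push_neg at hZ
      have h0 : ∀ x, (1 : ℝ) / ρ (n + 1) x ≤ 0 := by
        intro x
        refine one_div_nonpos.2 ?_
        rw [hrec' x]
        exact mul_nonpos_of_nonpos_of_nonneg hZ (hIpos x).le
      have h1 : ∫ x : UnitAddCircle, 1 / ρ (n + 1) x ≤ 0 := integral_nonpos h0
      rw [hnorm n] at h1
      linarith
    have hρpos : ∀ x, 0 < ρ (n + 1) x := fun x => by
      rw [hrec' x]; exact mul_pos hZ (hIpos x)
    have hρratio : ∀ x x', a * ρ (n + 1) x ≤ b * ρ (n + 1) x' := by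
      intro x x'
      rw [hrec' x, hrec' x']
      have h1 := mul_le_mul_of_nonneg_left (hIratio x x') hZ.le
      nlinarith [h1]
    have h1ρint : Integrable (fun x => 1 / ρ (n + 1) x) :=
      integrable_of_cont (continuous_const.div (hρcont (n + 1)) fun x => (hρpos x).ne')
    have hub : ∀ x', ρ (n + 1) x' ≤ b / a := by
      intro x'
      have hpt : ∀ x, (a * ρ (n + 1) x') * (1 / ρ (n + 1) x) ≤ b := by
        intro x
        rw [mul_one_div, div_le_iff₀ (hρpos x)]
        linarith [hρratio x' x]
      have hint := integral_mono (h1ρint.const_mul (a * ρ (n + 1) x'))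
        (integrable_const b) hpt
      rw [integral_const_mul, hnorm n, mul_one, integral_const_prob] at hint
      rw [le_div_iff₀ ha]
      linarith
    have hlb : ∀ x', a / b ≤ ρ (n + 1) x' := by
      intro x'
      have hpt : ∀ x, a ≤ (b * ρ (n + 1) x') * (1 / ρ (n + 1) x) := by
        intro x
        rw [mul_one_div, le_div_iff₀ (hρpos x)]
        linarith [hρratio x x']
      have hint := integral_mono (integrable_const a)
        (h1ρint.const_mul (b * ρ (n + 1) x')) hpt
      rw [integral_const_mul, hnorm n, mul_one, integral_const_prob] at hint
      rw [div_le_iff₀ hb]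
      linarith
    have hZJ : Z (n + 1) * (∫ x₂ : UnitAddCircle, 1 / D x₂) ≤ b / (a * a) := by
      have h1 : a * (∫ x₂ : UnitAddCircle, 1 / D x₂) ≤ I 0 := by
        calc a * (∫ x₂ : UnitAddCircle, 1 / D x₂)
            = ∫ x₂ : UnitAddCircle, a * (1 / D x₂) := (integral_const_mul _ _).symm
          _ ≤ I 0 := integral_mono (hJint.const_mul a) (hIint 0) fun x₂ => by
              rw [mul_one_div]
              exact div_le_div₀ (le_trans ha.le (hga 0 x₂)) (hga 0 x₂) (hDpos x₂) le_rfl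
      have h2 : ρ (n + 1) 0 ≤ b / a := hub 0
      rw [hrec' 0] at h2
      have h2a : Z (n + 1) * I 0 * a ≤ b := by
        rwa [le_div_iff₀ ha] at h2
      have h3 := mul_le_mul_of_nonneg_left h1 (mul_pos hZ ha).le
      rw [le_div_iff₀ (mul_pos ha ha)]
      nlinarith [h3, h2a]
    have hdiff : ∀ ε, 0 ≤ ε → ∀ x x', (∀ x₂, |g (x, x₂) - g (x', x₂)| ≤ ε) →
        |ρ (n + 1) x - ρ (n + 1) x'| ≤ ε * (b / (a * a)) := by
      intro ε hε x x' hΔ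
      have hIdiff : I x - I x' = ∫ x₂ : UnitAddCircle, (g (x, x₂) - g (x', x₂)) / D x₂ := by
        rw [hIdef]
        rw [← integral_sub (hIint x) (hIint x')]
        congr 1
        funext x₂
        rw [sub_div]
      have hsubint : Integrable (fun x₂ => (g (x, x₂) - g (x', x₂)) / D x₂) := by
        have := (hIint x).sub (hIint x')
        exact this.congr (Filter.Eventually.of_forall fun x₂ => by simp [sub_div])
      have habs : |I x - I x'| ≤ ε * ∫ x₂ : UnitAddCircle, 1 / D x₂ := by
        rw [hIdiff]
        calc |∫ x₂ : UnitAddCircle, (g (x, x₂) - g (x', x₂)) / D x₂|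
            ≤ ∫ x₂ : UnitAddCircle, |(g (x, x₂) - g (x', x₂)) / D x₂| := by
              simpa only [Real.norm_eq_abs] using
                norm_integral_le_integral_norm (μ := volume)
                  (fun x₂ => (g (x, x₂) - g (x', x₂)) / D x₂)
          _ ≤ ∫ x₂ : UnitAddCircle, ε * (1 / D x₂) := by
              refine integral_mono hsubint.abs (hJint.const_mul ε) fun x₂ => ?_
              rw [abs_div, abs_of_pos (hDpos x₂), mul_one_div]
              exact (div_le_div_iff_of_pos_right (hDpos x₂)).2 (hΔ x₂)
          _ = ε * ∫ x₂ : UnitAddCircle, 1 / D x₂ := integral_const_mul _ _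
      have hρd : ρ (n + 1) x - ρ (n + 1) x' = Z (n + 1) * (I x - I x') := by
        rw [hrec' x, hrec' x']; ring
      rw [hρd, abs_mul, abs_of_pos hZ]
      calc Z (n + 1) * |I x - I x'|
          ≤ Z (n + 1) * (ε * ∫ x₂ : UnitAddCircle, 1 / D x₂) :=
            mul_le_mul_of_nonneg_left habs hZ.le
        _ = ε * (Z (n + 1) * ∫ x₂ : UnitAddCircle, 1 / D x₂) := by ring
        _ ≤ ε * (b / (a * a)) := mul_le_mul_of_nonneg_left hZJ hε
    exact ⟨hρpos, fun x => ⟨hlb x, hub x⟩, hdiff⟩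
  -- positivity for all n
  have pos : ∀ n, ∀ x, 0 < ρ n x := by
    intro n
    induction n with
    | zero => intro x; rw [hρ0 x]; exact one_pos
    | succ n ih => exact (step n ih).1
  have hba1 : (1 : ℝ) ≤ b / a := (one_le_div ha).2 hab
  have hbound : ∀ n x, |ρ n x| ≤ b / a := by
    intro n x
    cases n with
    | zero => rw [hρ0 x]; simpa using hba1
    | succ n =>
      rw [abs_of_pos (pos _ x)]
      exact ((step n (pos n)).2.1 x).2
  -- equicontinuity
  have hK : 0 < b / (a * a) := div_pos hb (mul_pos ha ha)
  have hequi : Equicontinuous ρ := by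
    intro x
    rw [Metric.equicontinuousAt_iff]
    intro ε hε
    set ε' := ε / (2 * (1 + b / (a * a))) with hε'def
    have hden : (0 : ℝ) < 2 * (1 + b / (a * a)) := by linarith
    have hε' : 0 < ε' := div_pos hε hden
    have hkey : ε' * (b / (a * a)) < ε := by
      have heq : ε' * (2 * (1 + b / (a * a))) = ε := div_mul_cancel₀ ε hden.ne'
      nlinarith [mul_lt_mul_of_pos_left (show b / (a * a) < 2 * (1 + b / (a * a)) by linarith) hε']
    have hgu : UniformContinuous g := CompactSpace.uniformContinuous_of_continuous hg
    rcases Metric.uniformContinuous_iff.1 hgu ε' hε' with ⟨δ, hδ, hδ'⟩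
    refine ⟨δ, hδ, ?_⟩
    intro y hy n
    cases n with
    | zero => simpa [hρ0, Real.dist_eq] using hε
    | succ n =>
      have hΔ : ∀ x₂, |g (x, x₂) - g (y, x₂)| ≤ ε' := by
        intro x₂
        have hd : dist ((x, x₂) : UnitAddCircle × UnitAddCircle) (y, x₂) < δ := by
          rw [Prod.dist_eq]
          refine max_lt ?_ ?_
          · rwa [dist_comm]
          · simpa [dist_self] using hδ
        have := hδ' hd
        rw [Real.dist_eq] at this
        exact this.le
      have hdd := (step n (pos n)).2.2 ε' hε'.le x y hΔ
      rw [Real.dist_eq]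
      exact lt_of_le_of_lt hdd hkey
  refine ⟨⟨b / a, hbound⟩, hequi, ?_⟩
  -- Arzelà–Ascoli
  let F : ℕ → BoundedContinuousFunction UnitAddCircle ℝ := fun n =>
    BoundedContinuousFunction.mkOfCompact ⟨ρ n, hρcont n⟩
  have hcomp : IsCompact (closure (Set.range F)) := by
    refine BoundedContinuousFunction.arzela_ascoli (Set.Icc (-(b / a)) (b / a))
      isCompact_Icc (Set.range F) ?_ ?_
    · rintro f x ⟨n, rfl⟩
      have := abs_le.1 (hbound n x)
      exact ⟨this.1, this.2⟩
    · intro x U hU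
      filter_upwards [hequi x U hU] with y h
      rintro ⟨f, n, rfl⟩
      exact h n
  obtain ⟨f, -, φ, hφ, hconv⟩ := hcomp.isSeqCompact
    (x := F) fun n => subset_closure (Set.mem_range_self n)
  refine ⟨φ, hφ, f, ?_⟩
  exact BoundedContinuousFunction.tendsto_iff_tendstoUniformly.1 hconv
end

section
/- Let V : 𝕋ⁿ → ℝ be smooth and let ψ(t,·) solve the Fokker–Planck equation ∂ₜψ = div(∇Vψ + β⁻¹∇ψ) − ∂_{x₁}((A_t¹)'(x₁)ψ) − ∂_{x₂}((A_t²)'(x₂)ψ), where (A_t^α)'(x_α) = ∫ ∂_{x_α}V ψ dx_{ᾱ}dx₃…ₙ / ∫ ψ dx_{ᾱ}dx₃…ₙ. Then the marginals ψ^{x₁}(t,x₁) = ∫ψ dx₂dx₃…ₙ and ψ^{x₂}(t,x₂) = ∫ψ dx₁dx₃…ₙ satisfy the heat equations ∂ₜψ^{x_α} = β⁻¹∂_{x_α x_α}ψ^{x_α} on 𝕋. -/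
open MeasureTheory

/-- Partial derivative in the first coordinate. -/
noncomputable def pd1 {k : ℕ} (f : ℝ × ℝ × (Fin k → ℝ) → ℝ)
    (p : ℝ × ℝ × (Fin k → ℝ)) : ℝ :=
  deriv (fun s => f (s, p.2.1, p.2.2)) p.1

/-- Partial derivative in the second coordinate. -/
noncomputable def pd2 {k : ℕ} (f : ℝ × ℝ × (Fin k → ℝ) → ℝ)
    (p : ℝ × ℝ × (Fin k → ℝ)) : ℝ :=
  deriv (fun s => f (p.1, s, p.2.2)) p.2.1

/-- Partial derivative in the `i`-th remaining coordinate. -/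
noncomputable def pdy {k : ℕ} (i : Fin k) (f : ℝ × ℝ × (Fin k → ℝ) → ℝ)
    (p : ℝ × ℝ × (Fin k → ℝ)) : ℝ :=
  deriv (fun s => f (p.1, p.2.1, Function.update p.2.2 i s)) (p.2.2 i)


open Set

namespace ABFAux

noncomputable def mu (k : ℕ) : Measure (ℝ × (Fin k → ℝ)) :=
  (volume.restrict (Ioc (0:ℝ) 1)).prod (volume.restrict (Icc (0 : Fin k → ℝ) 1))

lemma mu_eq (k : ℕ) :
    mu k = volume.restrict (Ioc (0:ℝ) 1 ×ˢ Icc (0 : Fin k → ℝ) 1) := by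
  rw [mu, Measure.prod_restrict, ← Measure.volume_eq_prod]

instance (k : ℕ) : IsFiniteMeasure (mu k) := by
  constructor
  rw [mu_eq, Measure.restrict_apply_univ]
  exact lt_of_le_of_lt (measure_mono (Set.prod_mono Ioc_subset_Icc_self subset_rfl))
    ((isCompact_Icc.prod isCompact_Icc).measure_lt_top)

lemma integrable_mu {k : ℕ} {f : ℝ × (Fin k → ℝ) → ℝ} (hf : Continuous f) :
    Integrable f (mu k) := by
  rw [mu_eq]
  exact (hf.continuousOn.integrableOn_compact (isCompact_Icc.prod isCompact_Icc)).mono_set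
    (Set.prod_mono Ioc_subset_Icc_self subset_rfl)

lemma mu_univ (k : ℕ) : mu k Set.univ = 1 := by
  rw [mu, ← Set.univ_prod_univ, Measure.prod_prod, Measure.restrict_apply_univ,
    Measure.restrict_apply_univ, Real.volume_Ioc, Real.volume_Icc_pi]
  simp

lemma integral_mu_pos {k : ℕ} {f : ℝ × (Fin k → ℝ) → ℝ} (hf : Continuous f)
    (hpos : ∀ q, 0 < f q) : 0 < ∫ q, f q ∂(mu k) := by
  rw [integral_pos_iff_support_of_nonneg (fun q => (hpos q).le) (integrable_mu hf)]
  have : Function.support f = Set.univ := by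
    ext q; simp [Function.mem_support, (hpos q).ne']
  rw [this, mu_univ]
  norm_num

lemma double_integral_eq {k : ℕ} {f : ℝ × (Fin k → ℝ) → ℝ} (hf : Continuous f) :
    (∫ a in (0:ℝ)..1, ∫ y in Icc (0 : Fin k → ℝ) 1, f (a, y)) = ∫ q, f q ∂(mu k) := by
  rw [intervalIntegral.integral_of_le zero_le_one, mu]
  exact (MeasureTheory.integral_prod _ (integrable_mu hf)).symm

lemma hasDerivAt_integral_mu {k : ℕ} (g g' : ℝ → ℝ × (Fin k → ℝ) → ℝ)
    (hg : Continuous fun z : ℝ × (ℝ × (Fin k → ℝ)) => g z.1 z.2)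
    (hg' : Continuous fun z : ℝ × (ℝ × (Fin k → ℝ)) => g' z.1 z.2)
    (hd : ∀ s q, HasDerivAt (fun u => g u q) (g' s q) s) (s₀ : ℝ) :
    HasDerivAt (fun s => ∫ q, g s q ∂(mu k)) (∫ q, g' s₀ q ∂(mu k)) s₀ := by
  obtain ⟨C, hC⟩ := (IsCompact.exists_bound_of_continuousOn
    ((isCompact_Icc (a := s₀ - 1) (b := s₀ + 1)).prod
      (isCompact_Icc.prod isCompact_Icc))
    (hg'.continuousOn (s := (Icc (s₀-1) (s₀+1)) ×ˢ (Icc (0:ℝ) 1 ×ˢ Icc (0:Fin k → ℝ) 1))))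
  refine (hasDerivAt_integral_of_dominated_loc_of_deriv_le (F := g) (F' := g')
    (μ := mu k) (bound := fun _ => C) (s := Metric.ball s₀ 1) (Metric.ball_mem_nhds s₀ one_pos) ?_ ?_ ?_ ?_ ?_ ?_).2
  · exact Filter.Eventually.of_forall fun s =>
      (hg.comp (continuous_const.prodMk continuous_id)).aestronglyMeasurable
  · exact integrable_mu (hg.comp (continuous_const.prodMk continuous_id))
  · exact (hg'.comp (continuous_const.prodMk continuous_id)).aestronglyMeasurable
  · rw [mu_eq]
    filter_upwards [ae_restrict_mem ((measurableSet_Ioc).prod measurableSet_Icc)] with q hq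
    intro s hs
    have hs' : s ∈ Icc (s₀ - 1) (s₀ + 1) := by
      rw [Metric.mem_ball, Real.dist_eq, abs_lt] at hs
      constructor <;> linarith [hs.1, hs.2]
    exact hC (s, q) ⟨hs', ⟨Ioc_subset_Icc_self hq.1, hq.2⟩⟩
  · exact integrable_const C
  · exact Filter.Eventually.of_forall fun q s _ => hd s q

lemma deriv_periodic {g : ℝ → ℝ} (hg : ∀ s, g (s + 1) = g s) (x : ℝ) :
    deriv g (x + 1) = deriv g x := by
  have h : (fun s => g (s + 1)) = g := funext hg
  calc deriv g (x + 1) = deriv (fun s => g (s + 1)) x := (deriv_comp_add_const g 1 x).symm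
    _ = deriv g x := by rw [h]

variable {k : ℕ}

lemma hasDerivAt_sec1 {f : ℝ × ℝ × (Fin k → ℝ) → ℝ} (hf : ContDiff ℝ (⊤ : ℕ∞) f)
    (a b : ℝ) (y : Fin k → ℝ) :
    HasDerivAt (fun s => f (s, b, y))
      (fderiv ℝ f (a, b, y) (1, 0, 0)) a := by
  have h1 : HasDerivAt (fun s : ℝ => (s, b, y)) ((1:ℝ), (0:ℝ), (0 : Fin k → ℝ)) a :=
    (hasDerivAt_id a).prodMk ((hasDerivAt_const a b).prodMk (hasDerivAt_const a y))
  exact (hf.differentiable (by simp) _).hasFDerivAt.comp_hasDerivAt a h1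

lemma hasDerivAt_sec2 {f : ℝ × ℝ × (Fin k → ℝ) → ℝ} (hf : ContDiff ℝ (⊤ : ℕ∞) f)
    (a b : ℝ) (y : Fin k → ℝ) :
    HasDerivAt (fun s => f (a, s, y))
      (fderiv ℝ f (a, b, y) (0, 1, 0)) b := by
  have h1 : HasDerivAt (fun s : ℝ => (a, s, y)) ((0:ℝ), (1:ℝ), (0 : Fin k → ℝ)) b :=
    (hasDerivAt_const b a).prodMk ((hasDerivAt_id b).prodMk (hasDerivAt_const b y))
  exact (hf.differentiable (by simp) _).hasFDerivAt.comp_hasDerivAt b h1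

lemma hasDerivAt_update (y : Fin k → ℝ) (i : Fin k) (c : ℝ) :
    HasDerivAt (fun s : ℝ => Function.update y i s) (Pi.single i 1) c := by
  have h : (fun s : ℝ => Function.update y i s)
      = fun s : ℝ => Function.update y i 0 + s • (Pi.single i 1 : Fin k → ℝ) := by
    funext s
    ext l
    rcases eq_or_ne l i with rfl | hl
    · simp
    · simp [Function.update_of_ne hl, Pi.single_eq_of_ne hl]
  rw [h]
  simpa using ((hasDerivAt_id c).smul_const (Pi.single i 1 : Fin k → ℝ)).const_add
    (Function.update y i 0)

lemma hasDerivAt_sec3 {f : ℝ × ℝ × (Fin k → ℝ) → ℝ} (hf : ContDiff ℝ (⊤ : ℕ∞) f)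
    (a b : ℝ) (y : Fin k → ℝ) (i : Fin k) (c : ℝ) :
    HasDerivAt (fun s => f (a, b, Function.update y i s))
      (fderiv ℝ f (a, b, Function.update y i c) ((0:ℝ), (0:ℝ), Pi.single i 1)) c := by
  have h1 : HasDerivAt (fun s : ℝ => (a, b, Function.update y i s))
      ((0:ℝ), (0:ℝ), (Pi.single i 1 : Fin k → ℝ)) c :=
    (hasDerivAt_const c a).prodMk ((hasDerivAt_const c b).prodMk (hasDerivAt_update y i c))
  exact (hf.differentiable (by simp) _).hasFDerivAt.comp_hasDerivAt c h1

lemma pd1_eq {f : ℝ × ℝ × (Fin k → ℝ) → ℝ} (hf : ContDiff ℝ (⊤ : ℕ∞) f) :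
    pd1 f = fun p => fderiv ℝ f p (1, 0, 0) := by
  funext p
  exact (hasDerivAt_sec1 hf p.1 p.2.1 p.2.2).deriv

lemma pd2_eq {f : ℝ × ℝ × (Fin k → ℝ) → ℝ} (hf : ContDiff ℝ (⊤ : ℕ∞) f) :
    pd2 f = fun p => fderiv ℝ f p (0, 1, 0) := by
  funext p
  exact (hasDerivAt_sec2 hf p.1 p.2.1 p.2.2).deriv

lemma pdy_eq {f : ℝ × ℝ × (Fin k → ℝ) → ℝ} (hf : ContDiff ℝ (⊤ : ℕ∞) f) (i : Fin k) :
    pdy i f = fun p => fderiv ℝ f p ((0:ℝ), (0:ℝ), Pi.single i 1) := by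
  funext p
  have := (hasDerivAt_sec3 hf p.1 p.2.1 p.2.2 i (p.2.2 i)).deriv
  rw [Function.update_eq_self] at this
  exact this

lemma contDiff_pd1 {f : ℝ × ℝ × (Fin k → ℝ) → ℝ} (hf : ContDiff ℝ (⊤ : ℕ∞) f) :
    ContDiff ℝ (⊤ : ℕ∞) (pd1 f) := by
  rw [pd1_eq hf]
  exact (hf.fderiv_right (by simp)).clm_apply contDiff_const

lemma contDiff_pd2 {f : ℝ × ℝ × (Fin k → ℝ) → ℝ} (hf : ContDiff ℝ (⊤ : ℕ∞) f) :
    ContDiff ℝ (⊤ : ℕ∞) (pd2 f) := by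
  rw [pd2_eq hf]
  exact (hf.fderiv_right (by simp)).clm_apply contDiff_const

lemma contDiff_pdy {f : ℝ × ℝ × (Fin k → ℝ) → ℝ} (hf : ContDiff ℝ (⊤ : ℕ∞) f) (i : Fin k) :
    ContDiff ℝ (⊤ : ℕ∞) (pdy i f) := by
  rw [pdy_eq hf i]
  exact (hf.fderiv_right (by simp)).clm_apply contDiff_const

lemma integral_mu_deriv_eq_zero {k : ℕ} (h h' : ℝ → (Fin k → ℝ) → ℝ)
    (hh' : Continuous fun z : ℝ × (Fin k → ℝ) => h' z.1 z.2)
    (hd : ∀ a y, HasDerivAt (fun s => h s y) (h' a y) a)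
    (hper : ∀ y, h 1 y = h 0 y) :
    ∫ q, h' q.1 q.2 ∂(mu k) = 0 := by
  have hint : Integrable (fun z : ℝ × (Fin k → ℝ) => h' z.1 z.2)
      ((volume.restrict (Ioc (0:ℝ) 1)).prod (volume.restrict (Icc (0 : Fin k → ℝ) 1))) := by
    rw [← mu]; exact integrable_mu hh'
  have hint' : Integrable (Function.uncurry fun a y => h' a y)
      ((volume.restrict (Ioc (0:ℝ) 1)).prod (volume.restrict (Icc (0 : Fin k → ℝ) 1))) := hint
  rw [mu, MeasureTheory.integral_prod _ hint,
    MeasureTheory.integral_integral_swap hint']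
  have inner : ∀ y, (∫ a in Ioc (0:ℝ) 1, h' a y) = 0 := by
    intro y
    rw [← intervalIntegral.integral_of_le zero_le_one,
      intervalIntegral.integral_eq_sub_of_hasDerivAt (fun a _ => hd a y)
        ((hh'.comp (continuous_id.prodMk continuous_const)).intervalIntegrable 0 1),
      hper y, sub_self]
  simp_rw [inner]
  exact integral_zero _ _

lemma integral_dy_eq_zero {k : ℕ} (i : Fin k) (H : (Fin k → ℝ) → ℝ) (hH : ContDiff ℝ (⊤ : ℕ∞) H)
    (hper : ∀ y, H (Function.update y i (y i + 1)) = H y) :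
    (∫ y in Icc (0 : Fin k → ℝ) 1,
      deriv (fun s => H (Function.update y i s)) (y i)) = 0 := by
  cases k with
  | zero => exact i.elim0
  | succ m =>
  set e := MeasurableEquiv.piFinSuccAbove (fun _ : Fin (m+1) => ℝ) i with he
  set F : (Fin (m+1) → ℝ) → ℝ :=
    fun y => deriv (fun s => H (Function.update y i s)) (y i) with hFdef
  have hF : F = fun y => fderiv ℝ H y (Pi.single i 1 : Fin (m+1) → ℝ) := by
    funext y
    have h1 := (hH.differentiable (by simp) (Function.update y i (y i))).hasFDerivAt.comp_hasDerivAt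
      (y i) (hasDerivAt_update y i (y i))
    rw [Function.update_eq_self] at h1
    exact h1.deriv
  have hFc : Continuous F := by
    rw [hF]
    have h2 : ContDiff ℝ (⊤ : ℕ∞) (fun y => fderiv ℝ H y (Pi.single i 1 : Fin (m+1) → ℝ)) :=
      (hH.fderiv_right (by simp)).clm_apply contDiff_const
    exact h2.continuous
  have hins : Continuous (fun z : ℝ × (Fin m → ℝ) => (i.insertNth z.1 z.2 : Fin (m+1) → ℝ)) := by
    refine continuous_pi fun l => ?_
    refine Fin.succAboveCases i ?_ ?_ l
    · simp only [Fin.insertNth_apply_same]; exact continuous_fst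
    · intro j
      simp only [Fin.insertNth_apply_succAbove]
      exact (continuous_apply j).comp continuous_snd
  have hcurve : ∀ (z : Fin m → ℝ) (c : ℝ), HasDerivAt (fun u => H (i.insertNth u z))
      (fderiv ℝ H (i.insertNth c z) (Pi.single i 1 : Fin (m+1) → ℝ)) c := by
    intro z c
    have h : (fun u : ℝ => (i.insertNth u z : Fin (m+1) → ℝ))
        = fun u => i.insertNth 0 z + u • (Pi.single i 1 : Fin (m+1) → ℝ) := by
      funext u
      ext l
      refine Fin.succAboveCases i ?_ ?_ l
      · simp [Fin.insertNth_apply_same]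
      · intro j
        simp [Fin.insertNth_apply_succAbove, Pi.single_eq_of_ne (Fin.succAbove_ne i j)]
    have hcur : HasDerivAt (fun u : ℝ => (i.insertNth u z : Fin (m+1) → ℝ))
        (Pi.single i 1 : Fin (m+1) → ℝ) c := by
      rw [h]
      simpa using ((hasDerivAt_id c).smul_const (Pi.single i 1 : Fin (m+1) → ℝ)).const_add
        (i.insertNth 0 z)
    exact (hH.differentiable (by simp) _).hasFDerivAt.comp_hasDerivAt c hcur
  have hpre : e ⁻¹' (Icc (0:ℝ) 1 ×ˢ Icc (0 : Fin m → ℝ) 1) = Icc (0 : Fin (m+1) → ℝ) 1 := by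
    ext y
    simp only [he, MeasurableEquiv.piFinSuccAbove_apply, Set.mem_preimage, Set.mem_prod,
      Set.mem_Icc, Pi.le_def]
    constructor
    · rintro ⟨⟨h1, h2⟩, h3, h4⟩
      constructor
      · exact (Fin.forall_iff_succAbove i).2 ⟨h1, fun j => h3 j⟩
      · exact (Fin.forall_iff_succAbove i).2 ⟨h2, fun j => h4 j⟩
    · rintro ⟨h1, h2⟩
      exact ⟨⟨h1 i, h2 i⟩, fun j => h1 _, fun j => h2 _⟩
  have hmp := (volume_preserving_piFinSuccAbove (fun _ : Fin (m+1) => ℝ) i).restrict_preimage_emb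
    e.measurableEmbedding (Icc (0:ℝ) 1 ×ˢ Icc (0 : Fin m → ℝ) 1)
  rw [hpre] at hmp
  have key : (∫ y in Icc (0 : Fin (m+1) → ℝ) 1, F y)
      = ∫ z in Icc (0:ℝ) 1 ×ˢ Icc (0 : Fin m → ℝ) 1, F (e.symm z) := by
    have := hmp.integral_comp e.measurableEmbedding (fun z => F (e.symm z))
    simp only [he, MeasurableEquiv.symm_apply_apply] at this
    exact this
  have hGc : Continuous (fun z : ℝ × (Fin m → ℝ) => F (e.symm z)) := by
    have : (fun z : ℝ × (Fin m → ℝ) => F (e.symm z))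
        = fun z => F (i.insertNth z.1 z.2) := by
      funext z
      simp [he, MeasurableEquiv.piFinSuccAbove, Fin.insertNthEquiv]
    rw [this]
    exact hFc.comp hins
  have hGint : IntegrableOn (fun z : ℝ × (Fin m → ℝ) => F (e.symm z))
      (Icc (0:ℝ) 1 ×ˢ Icc (0 : Fin m → ℝ) 1) volume :=
    hGc.continuousOn.integrableOn_compact (isCompact_Icc.prod isCompact_Icc)
  have hGint' : Integrable (Function.uncurry fun s w => F (e.symm (s, w)))
      ((volume.restrict (Icc (0:ℝ) 1)).prod (volume.restrict (Icc (0 : Fin m → ℝ) 1))) := by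
    rw [Measure.prod_restrict, ← Measure.volume_eq_prod]
    exact hGint
  rw [hFdef] at key
  rw [key]
  have : (∫ z in Icc (0:ℝ) 1 ×ˢ Icc (0 : Fin m → ℝ) 1, F (e.symm z))
      = ∫ s in Icc (0:ℝ) 1, ∫ w in Icc (0 : Fin m → ℝ) 1, F (e.symm (s, w)) := by
    rw [Measure.volume_eq_prod, ← Measure.prod_restrict]
    exact MeasureTheory.integral_prod _ hGint'
  rw [this, MeasureTheory.integral_integral_swap hGint']
  have inner : ∀ w, (∫ s in Icc (0:ℝ) 1, F (e.symm (s, w))) = 0 := by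
    intro w
    have hsymm : ∀ s : ℝ, e.symm (s, w) = i.insertNth s w := by
      intro s; simp [he, MeasurableEquiv.piFinSuccAbove, Fin.insertNthEquiv]
    have hFval : ∀ s : ℝ, F (e.symm (s, w))
        = fderiv ℝ H (i.insertNth s w) (Pi.single i 1 : Fin (m+1) → ℝ) := by
      intro s; rw [hsymm s, hF]
    simp_rw [hFval]
    have h2 : ContDiff ℝ (⊤ : ℕ∞) (fun y => fderiv ℝ H y (Pi.single i 1 : Fin (m+1) → ℝ)) :=
      (hH.fderiv_right (by simp)).clm_apply contDiff_const
    rw [MeasureTheory.integral_Icc_eq_integral_Ioc,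
      ← intervalIntegral.integral_of_le zero_le_one,
      intervalIntegral.integral_eq_sub_of_hasDerivAt (fun s _ => hcurve w s)
        ((h2.continuous.comp
          (hins.comp (continuous_id.prodMk continuous_const))).intervalIntegrable 0 1)]
    have hb : (i.insertNth (1:ℝ) w : Fin (m+1) → ℝ)
        = Function.update (i.insertNth (0:ℝ) w : Fin (m+1) → ℝ) i
            ((i.insertNth (0:ℝ) w : Fin (m+1) → ℝ) i + 1) := by
      rw [Fin.insertNth_apply_same, Fin.update_insertNth, zero_add]
    rw [hb, hper, sub_self]
  simp_rw [inner]
  exact integral_zero _ _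

noncomputable def I1 (k : ℕ) (f : ℝ × ℝ × (Fin k → ℝ) → ℝ) (a : ℝ) : ℝ :=
  ∫ q, f (a, q.1, q.2) ∂(mu k)

noncomputable def I2 (k : ℕ) (f : ℝ × ℝ × (Fin k → ℝ) → ℝ) (a : ℝ) : ℝ :=
  ∫ q, f (q.1, a, q.2) ∂(mu k)

lemma I1_eq_iterated {k : ℕ} {f : ℝ × ℝ × (Fin k → ℝ) → ℝ} (hf : Continuous f) (a : ℝ) :
    (∫ x₂ in (0:ℝ)..1, ∫ y in Icc (0 : Fin k → ℝ) 1, f (a, x₂, y)) = I1 k f a :=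
  double_integral_eq (hf.comp (continuous_const.prodMk
    (continuous_fst.prodMk continuous_snd)))

lemma I2_eq_iterated {k : ℕ} {f : ℝ × ℝ × (Fin k → ℝ) → ℝ} (hf : Continuous f) (a : ℝ) :
    (∫ x₁ in (0:ℝ)..1, ∫ y in Icc (0 : Fin k → ℝ) 1, f (x₁, a, y)) = I2 k f a :=
  double_integral_eq (hf.comp (continuous_fst.prodMk
    (continuous_const.prodMk continuous_snd)))

lemma continuous_sec1 {k : ℕ} {f : ℝ × ℝ × (Fin k → ℝ) → ℝ} (hf : Continuous f) :
    Continuous (fun z : ℝ × (ℝ × (Fin k → ℝ)) => f (z.1, z.2.1, z.2.2)) :=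
  hf.comp (continuous_fst.prodMk
    ((continuous_fst.comp continuous_snd).prodMk (continuous_snd.comp continuous_snd)))

lemma continuous_sec2 {k : ℕ} {f : ℝ × ℝ × (Fin k → ℝ) → ℝ} (hf : Continuous f) :
    Continuous (fun z : ℝ × (ℝ × (Fin k → ℝ)) => f (z.2.1, z.1, z.2.2)) :=
  hf.comp ((continuous_fst.comp continuous_snd).prodMk
    (continuous_fst.prodMk (continuous_snd.comp continuous_snd)))

lemma hasDerivAt_I1 {k : ℕ} {f : ℝ × ℝ × (Fin k → ℝ) → ℝ} (hf : ContDiff ℝ (⊤ : ℕ∞) f) (a : ℝ) :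
    HasDerivAt (I1 k f) (I1 k (pd1 f) a) a := by
  refine hasDerivAt_integral_mu (fun s q => f (s, q.1, q.2)) (fun s q => pd1 f (s, q.1, q.2))
    (continuous_sec1 hf.continuous) (continuous_sec1 (contDiff_pd1 hf).continuous) ?_ a
  intro s q
  have := hasDerivAt_sec1 hf s q.1 q.2
  rw [pd1_eq hf]
  exact this

lemma hasDerivAt_I2 {k : ℕ} {f : ℝ × ℝ × (Fin k → ℝ) → ℝ} (hf : ContDiff ℝ (⊤ : ℕ∞) f) (a : ℝ) :
    HasDerivAt (I2 k f) (I2 k (pd2 f) a) a := by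
  refine hasDerivAt_integral_mu (fun s q => f (q.1, s, q.2)) (fun s q => pd2 f (q.1, s, q.2))
    (continuous_sec2 hf.continuous) (continuous_sec2 (contDiff_pd2 hf).continuous) ?_ a
  intro s q
  have := hasDerivAt_sec2 hf q.1 s q.2
  rw [pd2_eq hf]
  exact this

lemma deriv_I1 {k : ℕ} {f : ℝ × ℝ × (Fin k → ℝ) → ℝ} (hf : ContDiff ℝ (⊤ : ℕ∞) f) :
    deriv (I1 k f) = I1 k (pd1 f) :=
  funext fun a => (hasDerivAt_I1 hf a).deriv

lemma continuous_I1 {k : ℕ} {f : ℝ × ℝ × (Fin k → ℝ) → ℝ} (hf : ContDiff ℝ (⊤ : ℕ∞) f) :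
    Continuous (I1 k f) := by
  have : Differentiable ℝ (I1 k f) := fun a => (hasDerivAt_I1 hf a).differentiableAt
  exact this.continuous

lemma continuous_I2 {k : ℕ} {f : ℝ × ℝ × (Fin k → ℝ) → ℝ} (hf : ContDiff ℝ (⊤ : ℕ∞) f) :
    Continuous (I2 k f) := by
  have : Differentiable ℝ (I2 k f) := fun a => (hasDerivAt_I2 hf a).differentiableAt
  exact this.continuous

lemma I1_pos {k : ℕ} {f : ℝ × ℝ × (Fin k → ℝ) → ℝ} (hf : Continuous f)
    (hpos : ∀ p, 0 < f p) (a : ℝ) : 0 < I1 k f a :=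
  integral_mu_pos (hf.comp (continuous_const.prodMk
    (continuous_fst.prodMk continuous_snd))) (fun q => hpos _)

lemma I2_pos {k : ℕ} {f : ℝ × ℝ × (Fin k → ℝ) → ℝ} (hf : Continuous f)
    (hpos : ∀ p, 0 < f p) (a : ℝ) : 0 < I2 k f a :=
  integral_mu_pos (hf.comp (continuous_fst.prodMk
    (continuous_const.prodMk continuous_snd))) (fun q => hpos _)

lemma pd2_periodic {k : ℕ} {f : ℝ × ℝ × (Fin k → ℝ) → ℝ}
    (hfper : ∀ x₁ x₂ y, f (x₁, x₂ + 1, y) = f (x₁, x₂, y)) (x₁ b : ℝ) (y : Fin k → ℝ) :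
    pd2 f (x₁, b + 1, y) = pd2 f (x₁, b, y) :=
  deriv_periodic (g := fun s => f (x₁, s, y)) (fun s => hfper x₁ s y) b

lemma pdy_periodic {k : ℕ} {f : ℝ × ℝ × (Fin k → ℝ) → ℝ} {i : Fin k}
    (hfper : ∀ x₁ x₂ y, f (x₁, x₂, Function.update y i (y i + 1)) = f (x₁, x₂, y))
    (x₁ x₂ : ℝ) (y : Fin k → ℝ) :
    pdy i f (x₁, x₂, Function.update y i (y i + 1)) = pdy i f (x₁, x₂, y) := by
  have hg : ∀ s, (fun s => f (x₁, x₂, Function.update y i s)) (s + 1)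
      = (fun s => f (x₁, x₂, Function.update y i s)) s := by
    intro s
    have := hfper x₁ x₂ (Function.update y i s)
    rwa [Function.update_idem, Function.update_self] at this
  show deriv (fun s => f (x₁, x₂, Function.update (Function.update y i (y i + 1)) i s))
      ((Function.update y i (y i + 1)) i) = _
  simp only [Function.update_idem, Function.update_self]
  exact deriv_periodic hg (y i)

lemma key (k : ℕ) (β : ℝ)
    (V : ℝ × ℝ × (Fin k → ℝ) → ℝ) (hV : ContDiff ℝ (⊤ : ℕ∞) V)
    (hVper2 : ∀ x₁ x₂ y, V (x₁, x₂ + 1, y) = V (x₁, x₂, y))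
    (hVpery : ∀ x₁ x₂ y i, V (x₁, x₂, Function.update y i (y i + 1)) = V (x₁, x₂, y))
    (ψ : ℝ → ℝ × ℝ × (Fin k → ℝ) → ℝ)
    (hψ : ContDiff ℝ (⊤ : ℕ∞) (fun q : ℝ × (ℝ × ℝ × (Fin k → ℝ)) => ψ q.1 q.2))
    (hψpos : ∀ t p, 0 < ψ t p)
    (hψper2 : ∀ t x₁ x₂ y, ψ t (x₁, x₂ + 1, y) = ψ t (x₁, x₂, y))
    (hψpery : ∀ t x₁ x₂ y i,
      ψ t (x₁, x₂, Function.update y i (y i + 1)) = ψ t (x₁, x₂, y))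
    (A₁' A₂' : ℝ → ℝ → ℝ)
    (hA₁' : ∀ t x₁, A₁' t x₁ =
      (∫ x₂ in (0:ℝ)..1, ∫ y in Set.Icc (0 : Fin k → ℝ) 1,
          pd1 V (x₁, x₂, y) * ψ t (x₁, x₂, y)) /
      ∫ x₂ in (0:ℝ)..1, ∫ y in Set.Icc (0 : Fin k → ℝ) 1, ψ t (x₁, x₂, y))
    (hA₂' : ∀ t x₂, A₂' t x₂ =
      (∫ x₁ in (0:ℝ)..1, ∫ y in Set.Icc (0 : Fin k → ℝ) 1,
          pd2 V (x₁, x₂, y) * ψ t (x₁, x₂, y)) /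
      ∫ x₁ in (0:ℝ)..1, ∫ y in Set.Icc (0 : Fin k → ℝ) 1, ψ t (x₁, x₂, y))
    (hFP : ∀ t p, deriv (fun s => ψ s p) t =
      pd1 (fun q => pd1 V q * ψ t q + β⁻¹ * pd1 (ψ t) q) p +
      pd2 (fun q => pd2 V q * ψ t q + β⁻¹ * pd2 (ψ t) q) p +
      (∑ i : Fin k,
        pdy i (fun q => pdy i V q * ψ t q + β⁻¹ * pdy i (ψ t) q) p) -
      pd1 (fun q => A₁' t q.1 * ψ t q) p -
      pd2 (fun q => A₂' t q.2.1 * ψ t q) p)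
    (ψm₁ : ℝ → ℝ → ℝ)
    (hψm₁ : ∀ t x₁, ψm₁ t x₁ =
      ∫ x₂ in (0:ℝ)..1, ∫ y in Set.Icc (0 : Fin k → ℝ) 1, ψ t (x₁, x₂, y))
    (t x₁ : ℝ) :
    deriv (fun s => ψm₁ s x₁) t = β⁻¹ * deriv (deriv (ψm₁ t)) x₁ := by
  -- smoothness of sections
  have hψt : ∀ u, ContDiff ℝ (⊤ : ℕ∞) (ψ u) := fun u =>
    hψ.comp ((contDiff_const (c := u)).prodMk contDiff_id)
  have hψc : ∀ u, Continuous (ψ u) := fun u => (hψt u).continuous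
  -- the marginal is I1 of the section
  have hm : ∀ s a, ψm₁ s a = I1 k (ψ s) a := fun s a => by
    rw [hψm₁ s a]; exact I1_eq_iterated (hψc s) a
  -- main local functions
  set N : ℝ × ℝ × (Fin k → ℝ) → ℝ := fun q => pd1 V q * ψ t q with hNdef
  set N₂ : ℝ × ℝ × (Fin k → ℝ) → ℝ := fun q => pd2 V q * ψ t q with hN2def
  set G1 : ℝ × ℝ × (Fin k → ℝ) → ℝ :=
    fun q => pd1 V q * ψ t q + β⁻¹ * pd1 (ψ t) q with hG1def
  set G2 : ℝ × ℝ × (Fin k → ℝ) → ℝ :=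
    fun q => pd2 V q * ψ t q + β⁻¹ * pd2 (ψ t) q with hG2def
  set Gy : Fin k → ℝ × ℝ × (Fin k → ℝ) → ℝ :=
    fun i q => pdy i V q * ψ t q + β⁻¹ * pdy i (ψ t) q with hGydef
  have hNsm : ContDiff ℝ (⊤ : ℕ∞) N := (contDiff_pd1 hV).mul (hψt t)
  have hN2sm : ContDiff ℝ (⊤ : ℕ∞) N₂ := (contDiff_pd2 hV).mul (hψt t)
  have hG1sm : ContDiff ℝ (⊤ : ℕ∞) G1 :=
    hNsm.add (contDiff_const.mul (contDiff_pd1 (hψt t)))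
  have hG2sm : ContDiff ℝ (⊤ : ℕ∞) G2 :=
    hN2sm.add (contDiff_const.mul (contDiff_pd2 (hψt t)))
  have hGysm : ∀ i, ContDiff ℝ (⊤ : ℕ∞) (Gy i) := fun i =>
    ((contDiff_pdy hV i).mul (hψt t)).add
      (contDiff_const.mul (contDiff_pdy (hψt t) i))
  -- A₁' facts
  have hdenpos : ∀ a, 0 < I1 k (ψ t) a := I1_pos (hψc t) (hψpos t)
  have hden2pos : ∀ a, 0 < I2 k (ψ t) a := I2_pos (hψc t) (hψpos t)
  have hA1 : A₁' t = fun a => I1 k N a / I1 k (ψ t) a := by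
    funext a
    rw [hA₁' t a, I1_eq_iterated hNsm.continuous a, I1_eq_iterated (hψc t) a]
  have hA2 : A₂' t = fun a => I2 k N₂ a / I2 k (ψ t) a := by
    funext a
    rw [hA₂' t a, I2_eq_iterated hN2sm.continuous a, I2_eq_iterated (hψc t) a]
  set dA₁ : ℝ → ℝ := fun a =>
    (I1 k (pd1 N) a * I1 k (ψ t) a - I1 k N a * I1 k (pd1 (ψ t)) a)
      / (I1 k (ψ t) a) ^ 2 with hdA1def
  set dA₂ : ℝ → ℝ := fun a =>
    (I2 k (pd2 N₂) a * I2 k (ψ t) a - I2 k N₂ a * I2 k (pd2 (ψ t)) a)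
      / (I2 k (ψ t) a) ^ 2 with hdA2def
  have hA1d : ∀ a, HasDerivAt (A₁' t) (dA₁ a) a := by
    intro a
    rw [hA1]
    exact (hasDerivAt_I1 hNsm a).div (hasDerivAt_I1 (hψt t) a) (hdenpos a).ne'
  have hA2d : ∀ a, HasDerivAt (A₂' t) (dA₂ a) a := by
    intro a
    rw [hA2]
    exact (hasDerivAt_I2 hN2sm a).div (hasDerivAt_I2 (hψt t) a) (hden2pos a).ne'
  have hA1c : Continuous (A₁' t) := by
    rw [hA1]
    exact (continuous_I1 hNsm).div (continuous_I1 (hψt t)) fun a => (hdenpos a).ne'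
  have hA2c : Continuous (A₂' t) := by
    rw [hA2]
    exact (continuous_I2 hN2sm).div (continuous_I2 (hψt t)) fun a => (hden2pos a).ne'
  have hdA1c : Continuous dA₁ := by
    rw [hdA1def]
    refine Continuous.div ?_ ((continuous_I1 (hψt t)).pow 2)
      (fun a => pow_ne_zero 2 (hdenpos a).ne') 
    exact ((continuous_I1 (contDiff_pd1 hNsm)).mul (continuous_I1 (hψt t))).sub
      ((continuous_I1 hNsm).mul (continuous_I1 (contDiff_pd1 (hψt t))))
  have hdA2c : Continuous dA₂ := by
    rw [hdA2def]
    refine Continuous.div ?_ ((continuous_I2 (hψt t)).pow 2)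
      (fun a => pow_ne_zero 2 (hden2pos a).ne') 
    exact ((continuous_I2 (contDiff_pd2 hN2sm)).mul (continuous_I2 (hψt t))).sub
      ((continuous_I2 hN2sm).mul (continuous_I2 (contDiff_pd2 (hψt t))))
  -- pointwise derivative of the sections of ψ
  have hsec1ψ : ∀ (a b : ℝ) (y : Fin k → ℝ),
      HasDerivAt (fun s => ψ t (s, b, y)) (pd1 (ψ t) (a, b, y)) a := by
    intro a b y
    rw [pd1_eq (hψt t)]
    exact hasDerivAt_sec1 (hψt t) a b y
  have hsec2ψ : ∀ (a b : ℝ) (y : Fin k → ℝ),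
      HasDerivAt (fun s => ψ t (a, s, y)) (pd2 (ψ t) (a, b, y)) b := by
    intro a b y
    rw [pd2_eq (hψt t)]
    exact hasDerivAt_sec2 (hψt t) a b y
  -- products with the biasing forces
  have hprod1 : ∀ (a b : ℝ) (y : Fin k → ℝ),
      HasDerivAt (fun s => A₁' t s * ψ t (s, b, y))
        (dA₁ a * ψ t (a, b, y) + A₁' t a * pd1 (ψ t) (a, b, y)) a :=
    fun a b y => (hA1d a).mul (hsec1ψ a b y)
  have hprod2 : ∀ (a b : ℝ) (y : Fin k → ℝ),
      HasDerivAt (fun s => A₂' t s * ψ t (a, s, y))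
        (dA₂ b * ψ t (a, b, y) + A₂' t b * pd2 (ψ t) (a, b, y)) b :=
    fun a b y => (hA2d b).mul (hsec2ψ a b y)
  have hT4 : ∀ (a b : ℝ) (y : Fin k → ℝ), pd1 (fun q => A₁' t q.1 * ψ t q) (a, b, y)
      = dA₁ a * ψ t (a, b, y) + A₁' t a * pd1 (ψ t) (a, b, y) :=
    fun a b y => (hprod1 a b y).deriv
  have hT5 : ∀ (a b : ℝ) (y : Fin k → ℝ), pd2 (fun q => A₂' t q.2.1 * ψ t q) (a, b, y)
      = dA₂ b * ψ t (a, b, y) + A₂' t b * pd2 (ψ t) (a, b, y) :=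
    fun a b y => (hprod2 a b y).deriv
  -- time derivative
  set DΨ : ℝ × (ℝ × ℝ × (Fin k → ℝ)) → ℝ :=
    fun z => fderiv ℝ (fun w : ℝ × (ℝ × ℝ × (Fin k → ℝ)) => ψ w.1 w.2) z
      (1, 0) with hDΨdef
  have hDΨc : Continuous DΨ := by
    have h2 : ContDiff ℝ (⊤ : ℕ∞) DΨ := (hψ.fderiv_right (by simp)).clm_apply contDiff_const
    exact h2.continuous
  have hDt : ∀ (s : ℝ) (p : ℝ × ℝ × (Fin k → ℝ)),
      HasDerivAt (fun u => ψ u p) (DΨ (s, p)) s := by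
    intro s p
    have h1 : HasDerivAt (fun u : ℝ => (u, p)) ((1:ℝ), (0 : ℝ × ℝ × (Fin k → ℝ))) s :=
      (hasDerivAt_id s).prodMk (hasDerivAt_const s p)
    exact (hψ.differentiable (by simp) _).hasFDerivAt.comp_hasDerivAt s h1
  have hsecx : Continuous (fun q : ℝ × (Fin k → ℝ) =>
      ((x₁, q.1, q.2) : ℝ × ℝ × (Fin k → ℝ))) :=
    continuous_const.prodMk (continuous_fst.prodMk continuous_snd)
  -- derivative in time of the marginal
  have hLHS : HasDerivAt (fun s => ψm₁ s x₁)
      (∫ q, DΨ (t, (x₁, q.1, q.2)) ∂(mu k)) t := by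
    have heq : (fun s => ψm₁ s x₁) = fun s => ∫ q, ψ s (x₁, q.1, q.2) ∂(mu k) :=
      funext fun s => hm s x₁
    rw [heq]
    refine hasDerivAt_integral_mu (fun s q => ψ s (x₁, q.1, q.2))
      (fun s q => DΨ (s, (x₁, q.1, q.2))) ?_ ?_ (fun s q => hDt s _) t
    · exact hψ.continuous.comp (continuous_fst.prodMk (hsecx.comp continuous_snd))
    · exact hDΨc.comp (continuous_fst.prodMk (hsecx.comp continuous_snd))
  -- Fokker–Planck pointwise
  have hFP' : ∀ q : ℝ × (Fin k → ℝ), DΨ (t, (x₁, q.1, q.2)) =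
      pd1 G1 (x₁, q.1, q.2) + pd2 G2 (x₁, q.1, q.2)
        + (∑ i : Fin k, pdy i (Gy i) (x₁, q.1, q.2))
        - pd1 (fun q' => A₁' t q'.1 * ψ t q') (x₁, q.1, q.2)
        - pd2 (fun q' => A₂' t q'.2.1 * ψ t q') (x₁, q.1, q.2) :=
    fun q => ((hDt t _).deriv).symm.trans (hFP t _)
  -- integrability of the five pieces
  have hint1 : Integrable (fun q : ℝ × (Fin k → ℝ) => pd1 G1 (x₁, q.1, q.2)) (mu k) :=
    integrable_mu ((contDiff_pd1 hG1sm).continuous.comp hsecx)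
  have hint2 : Integrable (fun q : ℝ × (Fin k → ℝ) => pd2 G2 (x₁, q.1, q.2)) (mu k) :=
    integrable_mu ((contDiff_pd2 hG2sm).continuous.comp hsecx)
  have hint3 : Integrable (fun q : ℝ × (Fin k → ℝ) =>
      ∑ i : Fin k, pdy i (Gy i) (x₁, q.1, q.2)) (mu k) :=
    MeasureTheory.integrable_finset_sum _ fun i _ =>
      integrable_mu ((contDiff_pdy (hGysm i) i).continuous.comp hsecx)
  have hcont4 : Continuous (fun q : ℝ × (Fin k → ℝ) =>
      pd1 (fun q' => A₁' t q'.1 * ψ t q') (x₁, q.1, q.2)) := by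
    have heq : (fun q : ℝ × (Fin k → ℝ) =>
        pd1 (fun q' => A₁' t q'.1 * ψ t q') (x₁, q.1, q.2))
        = fun q : ℝ × (Fin k → ℝ) => dA₁ x₁ * ψ t (x₁, q.1, q.2)
            + A₁' t x₁ * pd1 (ψ t) (x₁, q.1, q.2) := funext fun q => hT4 x₁ q.1 q.2
    rw [heq]
    exact (continuous_const.mul ((hψc t).comp hsecx)).add
      (continuous_const.mul ((contDiff_pd1 (hψt t)).continuous.comp hsecx))
  have hint4 : Integrable (fun q : ℝ × (Fin k → ℝ) =>
      pd1 (fun q' => A₁' t q'.1 * ψ t q') (x₁, q.1, q.2)) (mu k) :=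
    integrable_mu hcont4
  have hcont5 : Continuous (fun q : ℝ × (Fin k → ℝ) =>
      pd2 (fun q' => A₂' t q'.2.1 * ψ t q') (x₁, q.1, q.2)) := by
    have heq : (fun q : ℝ × (Fin k → ℝ) =>
        pd2 (fun q' => A₂' t q'.2.1 * ψ t q') (x₁, q.1, q.2))
        = fun q : ℝ × (Fin k → ℝ) => dA₂ q.1 * ψ t (x₁, q.1, q.2)
            + A₂' t q.1 * pd2 (ψ t) (x₁, q.1, q.2) := funext fun q => hT5 x₁ q.1 q.2
    rw [heq]
    exact ((hdA2c.comp continuous_fst).mul ((hψc t).comp hsecx)).add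
      ((hA2c.comp continuous_fst).mul ((contDiff_pd2 (hψt t)).continuous.comp hsecx))
  have hint5 : Integrable (fun q : ℝ × (Fin k → ℝ) =>
      pd2 (fun q' => A₂' t q'.2.1 * ψ t q') (x₁, q.1, q.2)) (mu k) :=
    integrable_mu hcont5
  -- the five integrals
  -- (2) vanishes
  have hI2zero : (∫ q, pd2 G2 (x₁, q.1, q.2) ∂(mu k)) = 0 := by
    refine integral_mu_deriv_eq_zero (fun a y => G2 (x₁, a, y))
      (fun a y => pd2 G2 (x₁, a, y))
      ((contDiff_pd2 hG2sm).continuous.comp hsecx) ?_ ?_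
    · intro a y
      rw [pd2_eq hG2sm]
      exact hasDerivAt_sec2 hG2sm x₁ a y
    · intro y
      have h01 : (1:ℝ) = 0 + 1 := by norm_num
      rw [h01]
      show pd2 V (x₁, 0+1, y) * ψ t (x₁, 0+1, y) + β⁻¹ * pd2 (ψ t) (x₁, 0+1, y)
        = pd2 V (x₁, 0, y) * ψ t (x₁, 0, y) + β⁻¹ * pd2 (ψ t) (x₁, 0, y)
      rw [pd2_periodic hVper2, pd2_periodic (hψper2 t), hψper2 t]
  -- (5) vanishes
  have hA2per : A₂' t 1 = A₂' t 0 := by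
    rw [hA2]
    have e1 : I2 k N₂ 1 = I2 k N₂ 0 := by
      have h01 : (1:ℝ) = 0 + 1 := by norm_num
      rw [h01]
      show (∫ q, N₂ (q.1, 0 + 1, q.2) ∂(mu k)) = ∫ q, N₂ (q.1, 0, q.2) ∂(mu k)
      refine integral_congr_ae (Filter.Eventually.of_forall fun q => ?_)
      show pd2 V (q.1, 0+1, q.2) * ψ t (q.1, 0+1, q.2) = pd2 V (q.1, 0, q.2) * ψ t (q.1, 0, q.2)
      rw [pd2_periodic hVper2, hψper2 t]
    have e2 : I2 k (ψ t) 1 = I2 k (ψ t) 0 := by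
      have h01 : (1:ℝ) = 0 + 1 := by norm_num
      rw [h01]
      show (∫ q, ψ t (q.1, 0 + 1, q.2) ∂(mu k)) = ∫ q, ψ t (q.1, 0, q.2) ∂(mu k)
      refine integral_congr_ae (Filter.Eventually.of_forall fun q => ?_)
      exact hψper2 t q.1 0 q.2
    show I2 k N₂ 1 / I2 k (ψ t) 1 = I2 k N₂ 0 / I2 k (ψ t) 0
    rw [e1, e2]
  have hI5zero : (∫ q, pd2 (fun q' => A₂' t q'.2.1 * ψ t q') (x₁, q.1, q.2) ∂(mu k)) = 0 := by
    refine integral_mu_deriv_eq_zero (fun a y => A₂' t a * ψ t (x₁, a, y))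
      (fun a y => pd2 (fun q' => A₂' t q'.2.1 * ψ t q') (x₁, a, y)) hcont5 ?_ ?_
    · intro a y
      have h := hprod2 x₁ a y
      rw [← hT5 x₁ a y] at h
      exact h
    · intro y
      show A₂' t 1 * ψ t (x₁, 1, y) = A₂' t 0 * ψ t (x₁, 0, y)
      have h01 : (1:ℝ) = 0 + 1 := by norm_num
      rw [hA2per, h01, hψper2 t]
  -- (3) vanishes
  have hI3zero : (∫ q, ∑ i : Fin k, pdy i (Gy i) (x₁, q.1, q.2) ∂(mu k)) = 0 := by
    have hint3' : ∀ i : Fin k, Integrable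
        (fun q : ℝ × (Fin k → ℝ) => pdy i (Gy i) (x₁, q.1, q.2)) (mu k) := fun i =>
      integrable_mu ((contDiff_pdy (hGysm i) i).continuous.comp hsecx)
    rw [MeasureTheory.integral_finset_sum _ fun i _ => hint3' i]
    refine Finset.sum_eq_zero fun i _ => ?_
    have hintc : Integrable (fun q : ℝ × (Fin k → ℝ) => pdy i (Gy i) (x₁, q.1, q.2))
        ((volume.restrict (Ioc (0:ℝ) 1)).prod
          (volume.restrict (Icc (0 : Fin k → ℝ) 1))) := by
      rw [← mu]
      exact integrable_mu ((contDiff_pdy (hGysm i) i).continuous.comp hsecx)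
    rw [mu, MeasureTheory.integral_prod _ hintc]
    have inner0 : ∀ a : ℝ,
        (∫ y in Icc (0 : Fin k → ℝ) 1, pdy i (Gy i) (x₁, a, y)) = 0 := by
      intro a
      refine integral_dy_eq_zero i (fun y => Gy i (x₁, a, y))
        ((hGysm i).comp (contDiff_const.prodMk (contDiff_const.prodMk contDiff_id))) ?_
      intro y
      show pdy i V (x₁, a, Function.update y i (y i + 1)) * ψ t (x₁, a, Function.update y i (y i + 1))
          + β⁻¹ * pdy i (ψ t) (x₁, a, Function.update y i (y i + 1))
        = pdy i V (x₁, a, y) * ψ t (x₁, a, y) + β⁻¹ * pdy i (ψ t) (x₁, a, y)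
      rw [pdy_periodic (fun a b y' => hVpery a b y' i),
        pdy_periodic (fun a b y' => hψpery t a b y' i), hψpery t x₁ a y i]
    simp_rw [inner0]
    exact integral_zero _ _
  -- (1): derivative of I1 G1
  have hIG1 : I1 k G1 = fun a => I1 k N a + β⁻¹ * I1 k (pd1 (ψ t)) a := by
    funext a
    show (∫ q, (N (a, q.1, q.2) + β⁻¹ * pd1 (ψ t) (a, q.1, q.2)) ∂(mu k)) = _
    have ha1 : Integrable (fun q : ℝ × (Fin k → ℝ) => N (a, q.1, q.2)) (mu k) :=
      integrable_mu (hNsm.continuous.comp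
        (continuous_const.prodMk (continuous_fst.prodMk continuous_snd)))
    have ha2 : Integrable (fun q : ℝ × (Fin k → ℝ) =>
        β⁻¹ * pd1 (ψ t) (a, q.1, q.2)) (mu k) :=
      (integrable_mu ((contDiff_pd1 (hψt t)).continuous.comp
        (continuous_const.prodMk (continuous_fst.prodMk continuous_snd)))).const_mul β⁻¹
    rw [MeasureTheory.integral_add ha1 ha2, MeasureTheory.integral_const_mul]
    rfl
  have hI1G1 : (∫ q, pd1 G1 (x₁, q.1, q.2) ∂(mu k))
      = I1 k (pd1 N) x₁ + β⁻¹ * I1 k (pd1 (pd1 (ψ t))) x₁ := by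
    have h1 : (∫ q, pd1 G1 (x₁, q.1, q.2) ∂(mu k)) = I1 k (pd1 G1) x₁ := rfl
    have h2 := (hasDerivAt_I1 hG1sm x₁).deriv
    have h3 : HasDerivAt (fun a => I1 k N a + β⁻¹ * I1 k (pd1 (ψ t)) a)
        (I1 k (pd1 N) x₁ + β⁻¹ * I1 k (pd1 (pd1 (ψ t))) x₁) x₁ :=
      (hasDerivAt_I1 hNsm x₁).add ((hasDerivAt_I1 (contDiff_pd1 (hψt t)) x₁).const_mul β⁻¹)
    rw [h1, ← h2, hIG1]
    exact h3.deriv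
  -- second derivative of the marginal
  have hψm1t : ψm₁ t = I1 k (ψ t) := funext (hm t)
  have hd2m : deriv (deriv (ψm₁ t)) x₁ = I1 k (pd1 (pd1 (ψ t))) x₁ := by
    rw [hψm1t, deriv_I1 (hψt t)]
    exact (hasDerivAt_I1 (contDiff_pd1 (hψt t)) x₁).deriv
  -- (4): equals derivative of the numerator
  have hnum_eq : I1 k N = fun a => A₁' t a * I1 k (ψ t) a := by
    funext a
    rw [hA1]
    show I1 k N a = I1 k N a / I1 k (ψ t) a * I1 k (ψ t) a
    exact (div_mul_cancel₀ _ (hdenpos a).ne').symm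
  have hI4 : (∫ q, pd1 (fun q' => A₁' t q'.1 * ψ t q') (x₁, q.1, q.2) ∂(mu k))
      = I1 k (pd1 N) x₁ := by
    have heq : (fun q : ℝ × (Fin k → ℝ) =>
        pd1 (fun q' => A₁' t q'.1 * ψ t q') (x₁, q.1, q.2))
        = fun q : ℝ × (Fin k → ℝ) => dA₁ x₁ * ψ t (x₁, q.1, q.2)
            + A₁' t x₁ * pd1 (ψ t) (x₁, q.1, q.2) := funext fun q => hT4 x₁ q.1 q.2
    have hi4a : Integrable (fun q : ℝ × (Fin k → ℝ) =>
        dA₁ x₁ * ψ t (x₁, q.1, q.2)) (mu k) :=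
      (integrable_mu ((hψc t).comp hsecx)).const_mul _
    have hi4b : Integrable (fun q : ℝ × (Fin k → ℝ) =>
        A₁' t x₁ * pd1 (ψ t) (x₁, q.1, q.2)) (mu k) :=
      (integrable_mu ((contDiff_pd1 (hψt t)).continuous.comp hsecx)).const_mul _
    rw [heq, MeasureTheory.integral_add hi4a hi4b,
      MeasureTheory.integral_const_mul, MeasureTheory.integral_const_mul]
    have hprodd : HasDerivAt (fun a => A₁' t a * I1 k (ψ t) a)
        (dA₁ x₁ * I1 k (ψ t) x₁ + A₁' t x₁ * I1 k (pd1 (ψ t)) x₁) x₁ :=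
      (hA1d x₁).mul (hasDerivAt_I1 (hψt t) x₁)
    rw [← hnum_eq] at hprodd
    exact ((hasDerivAt_I1 hNsm x₁).unique hprodd).symm
  -- assemble
  rw [hLHS.deriv]
  calc (∫ q, DΨ (t, (x₁, q.1, q.2)) ∂(mu k))
      = ∫ q, (pd1 G1 (x₁, q.1, q.2) + pd2 G2 (x₁, q.1, q.2)
          + (∑ i : Fin k, pdy i (Gy i) (x₁, q.1, q.2))
          - pd1 (fun q' => A₁' t q'.1 * ψ t q') (x₁, q.1, q.2)
          - pd2 (fun q' => A₂' t q'.2.1 * ψ t q') (x₁, q.1, q.2)) ∂(mu k) := by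
        exact integral_congr_ae (Filter.Eventually.of_forall fun q => hFP' q)
    _ = (∫ q, pd1 G1 (x₁, q.1, q.2) ∂(mu k)) + (∫ q, pd2 G2 (x₁, q.1, q.2) ∂(mu k))
          + (∫ q, ∑ i : Fin k, pdy i (Gy i) (x₁, q.1, q.2) ∂(mu k))
          - (∫ q, pd1 (fun q' => A₁' t q'.1 * ψ t q') (x₁, q.1, q.2) ∂(mu k))
          - (∫ q, pd2 (fun q' => A₂' t q'.2.1 * ψ t q') (x₁, q.1, q.2) ∂(mu k)) := by
        have hs12 : Integrable (fun q : ℝ × (Fin k → ℝ) =>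
            pd1 G1 (x₁, q.1, q.2) + pd2 G2 (x₁, q.1, q.2)) (mu k) := hint1.add hint2
        have hs123 : Integrable (fun q : ℝ × (Fin k → ℝ) =>
            pd1 G1 (x₁, q.1, q.2) + pd2 G2 (x₁, q.1, q.2)
              + ∑ i : Fin k, pdy i (Gy i) (x₁, q.1, q.2)) (mu k) := hs12.add hint3
        have hs1234 : Integrable (fun q : ℝ × (Fin k → ℝ) =>
            pd1 G1 (x₁, q.1, q.2) + pd2 G2 (x₁, q.1, q.2)
              + (∑ i : Fin k, pdy i (Gy i) (x₁, q.1, q.2))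
              - pd1 (fun q' => A₁' t q'.1 * ψ t q') (x₁, q.1, q.2)) (mu k) :=
          hs123.sub hint4
        rw [MeasureTheory.integral_sub hs1234 hint5,
          MeasureTheory.integral_sub hs123 hint4,
          MeasureTheory.integral_add hs12 hint3,
          MeasureTheory.integral_add hint1 hint2]
    _ = β⁻¹ * deriv (deriv (ψm₁ t)) x₁ := by
        rw [hI1G1, hI2zero, hI3zero, hI4, hI5zero, hd2m]
        ring

end ABFAux

/-- Proposition 1: for the Fokker–Planck equation of the
tensorized ABF dynamics on the `n`-torus (modeled by `1`-periodic functions on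
`ℝ × ℝ × ℝᵏ`), the marginals in the two biased coordinates satisfy the heat
equation `∂ₜψ^{x_α} = β⁻¹ ∂_{x_α x_α} ψ^{x_α}`. -/
theorem abf_marginals_heat_equation
    (k : ℕ) (β : ℝ) (hβ : 0 < β)
    (V : ℝ × ℝ × (Fin k → ℝ) → ℝ) (hV : ContDiff ℝ (⊤ : ℕ∞) V)
    (hVper1 : ∀ x₁ x₂ y, V (x₁ + 1, x₂, y) = V (x₁, x₂, y))
    (hVper2 : ∀ x₁ x₂ y, V (x₁, x₂ + 1, y) = V (x₁, x₂, y))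
    (hVpery : ∀ x₁ x₂ y i, V (x₁, x₂, Function.update y i (y i + 1)) = V (x₁, x₂, y))
    (ψ : ℝ → ℝ × ℝ × (Fin k → ℝ) → ℝ)
    (hψ : ContDiff ℝ (⊤ : ℕ∞) (fun q : ℝ × (ℝ × ℝ × (Fin k → ℝ)) => ψ q.1 q.2))
    (hψpos : ∀ t p, 0 < ψ t p)
    (hψper1 : ∀ t x₁ x₂ y, ψ t (x₁ + 1, x₂, y) = ψ t (x₁, x₂, y))
    (hψper2 : ∀ t x₁ x₂ y, ψ t (x₁, x₂ + 1, y) = ψ t (x₁, x₂, y))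
    (hψpery : ∀ t x₁ x₂ y i,
      ψ t (x₁, x₂, Function.update y i (y i + 1)) = ψ t (x₁, x₂, y))
    (A₁' A₂' : ℝ → ℝ → ℝ)
    (hA₁' : ∀ t x₁, A₁' t x₁ =
      (∫ x₂ in (0:ℝ)..1, ∫ y in Set.Icc (0 : Fin k → ℝ) 1,
          pd1 V (x₁, x₂, y) * ψ t (x₁, x₂, y)) /
      ∫ x₂ in (0:ℝ)..1, ∫ y in Set.Icc (0 : Fin k → ℝ) 1, ψ t (x₁, x₂, y))
    (hA₂' : ∀ t x₂, A₂' t x₂ =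
      (∫ x₁ in (0:ℝ)..1, ∫ y in Set.Icc (0 : Fin k → ℝ) 1,
          pd2 V (x₁, x₂, y) * ψ t (x₁, x₂, y)) /
      ∫ x₁ in (0:ℝ)..1, ∫ y in Set.Icc (0 : Fin k → ℝ) 1, ψ t (x₁, x₂, y))
    (hFP : ∀ t p, deriv (fun s => ψ s p) t =
      pd1 (fun q => pd1 V q * ψ t q + β⁻¹ * pd1 (ψ t) q) p +
      pd2 (fun q => pd2 V q * ψ t q + β⁻¹ * pd2 (ψ t) q) p +
      (∑ i : Fin k,
        pdy i (fun q => pdy i V q * ψ t q + β⁻¹ * pdy i (ψ t) q) p) -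
      pd1 (fun q => A₁' t q.1 * ψ t q) p -
      pd2 (fun q => A₂' t q.2.1 * ψ t q) p)
    (ψm₁ ψm₂ : ℝ → ℝ → ℝ)
    (hψm₁ : ∀ t x₁, ψm₁ t x₁ =
      ∫ x₂ in (0:ℝ)..1, ∫ y in Set.Icc (0 : Fin k → ℝ) 1, ψ t (x₁, x₂, y))
    (hψm₂ : ∀ t x₂, ψm₂ t x₂ =
      ∫ x₁ in (0:ℝ)..1, ∫ y in Set.Icc (0 : Fin k → ℝ) 1, ψ t (x₁, x₂, y)) :
    (∀ t x₁, deriv (fun s => ψm₁ s x₁) t = β⁻¹ * deriv (deriv (ψm₁ t)) x₁) ∧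
    (∀ t x₂, deriv (fun s => ψm₂ s x₂) t = β⁻¹ * deriv (deriv (ψm₂ t)) x₂) := by
  constructor
  · intro t x₁
    exact ABFAux.key k β V hV hVper2 hVpery ψ hψ hψpos hψper2 hψpery A₁' A₂'
      hA₁' hA₂' hFP ψm₁ hψm₁ t x₁
  · intro t x₂
    have hswap : ContDiff ℝ (⊤ : ℕ∞) (fun p : ℝ × ℝ × (Fin k → ℝ) =>
        ((p.2.1, p.1, p.2.2) : ℝ × ℝ × (Fin k → ℝ))) :=
      contDiff_snd.fst.prodMk (contDiff_fst.prodMk contDiff_snd.snd)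
    have hψ' : ContDiff ℝ (⊤ : ℕ∞) (fun z : ℝ × (ℝ × ℝ × (Fin k → ℝ)) =>
        ψ z.1 (z.2.2.1, z.2.1, z.2.2.2)) :=
      hψ.comp (contDiff_fst.prodMk (contDiff_snd.snd.fst.prodMk
        (contDiff_snd.fst.prodMk contDiff_snd.snd.snd)))
    exact ABFAux.key k β (fun p => V (p.2.1, p.1, p.2.2)) (hV.comp hswap)
      (fun a b y => hVper1 b a y) (fun a b y i => hVpery b a y i)
      (fun u p => ψ u (p.2.1, p.1, p.2.2)) hψ' (fun u p => hψpos u _)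
      (fun u a b y => hψper1 u b a y) (fun u a b y i => hψpery u b a y i)
      A₂' A₁' (fun u a => hA₂' u a) (fun u a => hA₁' u a)
      (fun u p => by
        show deriv (fun s => ψ s (p.2.1, p.1, p.2.2)) u =
            pd2 (fun q => pd2 V q * ψ u q + β⁻¹ * pd2 (ψ u) q) (p.2.1, p.1, p.2.2) +
            pd1 (fun q => pd1 V q * ψ u q + β⁻¹ * pd1 (ψ u) q) (p.2.1, p.1, p.2.2) +
            (∑ i : Fin k, pdy i (fun q => pdy i V q * ψ u q + β⁻¹ * pdy i (ψ u) q)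
              (p.2.1, p.1, p.2.2)) -
            pd2 (fun q => A₂' u q.2.1 * ψ u q) (p.2.1, p.1, p.2.2) -
            pd1 (fun q => A₁' u q.1 * ψ u q) (p.2.1, p.1, p.2.2)
        rw [hFP u (p.2.1, p.1, p.2.2)]
        ring) ψm₂ (fun u a => hψm₂ u a) t x₂
end

section
/- Let ψ_∞(x) = Z⁻¹ exp(−β(V(x) − A_∞¹(x₁) − A_∞²(x₂))) where (A_∞¹, A_∞²) solves the stationary fixed-point system of the tensorized ABF method (i.e., ρᵅ = exp(−βA_∞ᵅ) solve ρ¹(x₁) = c₁∫exp(−βV)/ρ²(x₂) dx₂dx₃…ₙ and ρ²(x₂) = c₂∫exp(−βV)/ρ¹(x₁) dx₁dx₃…ₙ, with normalization constants). Then the marginals of ψ_∞ along x₁ and along x₂ are both the uniform density 1 on 𝕋. -/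
open MeasureTheory

instance : IsProbabilityMeasure (volume : Measure UnitAddCircle) :=
  ⟨UnitAddCircle.measure_univ⟩

/-- If `(A∞¹, A∞²)` solves the stationary fixed-point system of
the tensorized ABF method (through `ρᵅ = exp(−βA∞ᵅ)`), then the stationary
density `ψ∞ ∝ exp(−β(V − A∞¹(x₁) − A∞²(x₂)))` has uniform marginals along
`x₁` and along `x₂`. -/
theorem abf_stationary_marginals_uniform
    (k : ℕ) (β : ℝ) (hβ : 0 < β)
    (V : UnitAddCircle × UnitAddCircle × (Fin k → UnitAddCircle) → ℝ)
    (hV : Continuous V)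
    (ρ1 ρ2 : UnitAddCircle → ℝ)
    (hρ1cont : Continuous ρ1) (hρ2cont : Continuous ρ2)
    (hρ1pos : ∀ x, 0 < ρ1 x) (hρ2pos : ∀ x, 0 < ρ2 x)
    (c₁ c₂ : ℝ)
    (hfix1 : ∀ x₁, ρ1 x₁ = c₁ *
      ∫ p : UnitAddCircle × (Fin k → UnitAddCircle),
        Real.exp (-β * V (x₁, p.1, p.2)) / ρ2 p.1)
    (hfix2 : ∀ x₂, ρ2 x₂ = c₂ *
      ∫ p : UnitAddCircle × (Fin k → UnitAddCircle),
        Real.exp (-β * V (p.1, x₂, p.2)) / ρ1 p.1)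
    (Z : ℝ) (hZ : Z ≠ 0)
    (ψi : UnitAddCircle × UnitAddCircle × (Fin k → UnitAddCircle) → ℝ)
    (hψi : ∀ x, ψi x = Z⁻¹ * Real.exp (-β * V x) / (ρ1 x.1 * ρ2 x.2.1))
    (hnorm : ∫ x, ψi x = 1) :
    (∀ x₁, ∫ p : UnitAddCircle × (Fin k → UnitAddCircle),
        ψi (x₁, p.1, p.2) = 1) ∧
    (∀ x₂, ∫ p : UnitAddCircle × (Fin k → UnitAddCircle),
        ψi (p.1, x₂, p.2) = 1) := by
  have hρ1ne : ∀ x, ρ1 x ≠ 0 := fun x => (hρ1pos x).ne'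
  have hρ2ne : ∀ x, ρ2 x ≠ 0 := fun x => (hρ2pos x).ne'
  have hc₁ : c₁ ≠ 0 := by
    intro h
    have := hfix1 0
    rw [h, zero_mul] at this
    exact hρ1ne 0 this
  have hc₂ : c₂ ≠ 0 := by
    intro h
    have := hfix2 0
    rw [h, zero_mul] at this
    exact hρ2ne 0 this
  have hψeq : ψi = fun x => Z⁻¹ * Real.exp (-β * V x) / (ρ1 x.1 * ρ2 x.2.1) :=
    funext hψi
  have hψcont : Continuous ψi := by
    rw [hψeq]
    exact (continuous_const.mul (Real.continuous_exp.comp (continuous_const.mul hV))).div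
      ((hρ1cont.comp continuous_fst).mul
        (hρ2cont.comp (continuous_fst.comp continuous_snd)))
      (fun x => mul_ne_zero (hρ1ne _) (hρ2ne _))
  -- key marginal computations
  have key1 : ∀ x₁ : UnitAddCircle,
      (∫ p : UnitAddCircle × (Fin k → UnitAddCircle), ψi (x₁, p.1, p.2))
        = Z⁻¹ / c₁ := by
    intro x₁
    have hpt : ∀ p : UnitAddCircle × (Fin k → UnitAddCircle),
        ψi (x₁, p.1, p.2)
          = (Z⁻¹ / ρ1 x₁) * (Real.exp (-β * V (x₁, p.1, p.2)) / ρ2 p.1) := by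
      intro p
      rw [hψi]
      simp only [div_eq_mul_inv, mul_inv]
      ring
    have hJ : (∫ p : UnitAddCircle × (Fin k → UnitAddCircle),
        Real.exp (-β * V (x₁, p.1, p.2)) / ρ2 p.1) = ρ1 x₁ / c₁ := by
      rw [eq_div_iff hc₁, mul_comm]
      exact (hfix1 x₁).symm
    calc (∫ p : UnitAddCircle × (Fin k → UnitAddCircle), ψi (x₁, p.1, p.2))
        = ∫ p : UnitAddCircle × (Fin k → UnitAddCircle),
            (Z⁻¹ / ρ1 x₁) * (Real.exp (-β * V (x₁, p.1, p.2)) / ρ2 p.1) := by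
          simp_rw [hpt]
      _ = (Z⁻¹ / ρ1 x₁) * ∫ p : UnitAddCircle × (Fin k → UnitAddCircle),
            Real.exp (-β * V (x₁, p.1, p.2)) / ρ2 p.1 := integral_const_mul _ _
      _ = (Z⁻¹ / ρ1 x₁) * (ρ1 x₁ / c₁) := by rw [hJ]
      _ = Z⁻¹ / c₁ := by
          rw [div_mul_div_comm, mul_comm Z⁻¹ (ρ1 x₁),
            mul_div_mul_left _ _ (hρ1ne x₁)]
  have key2 : ∀ x₂ : UnitAddCircle,
      (∫ p : UnitAddCircle × (Fin k → UnitAddCircle), ψi (p.1, x₂, p.2))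
        = Z⁻¹ / c₂ := by
    intro x₂
    have hpt : ∀ p : UnitAddCircle × (Fin k → UnitAddCircle),
        ψi (p.1, x₂, p.2)
          = (Z⁻¹ / ρ2 x₂) * (Real.exp (-β * V (p.1, x₂, p.2)) / ρ1 p.1) := by
      intro p
      rw [hψi]
      simp only [div_eq_mul_inv, mul_inv]
      ring
    have hJ : (∫ p : UnitAddCircle × (Fin k → UnitAddCircle),
        Real.exp (-β * V (p.1, x₂, p.2)) / ρ1 p.1) = ρ2 x₂ / c₂ := by
      rw [eq_div_iff hc₂, mul_comm]
      exact (hfix2 x₂).symm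
    calc (∫ p : UnitAddCircle × (Fin k → UnitAddCircle), ψi (p.1, x₂, p.2))
        = ∫ p : UnitAddCircle × (Fin k → UnitAddCircle),
            (Z⁻¹ / ρ2 x₂) * (Real.exp (-β * V (p.1, x₂, p.2)) / ρ1 p.1) := by
          simp_rw [hpt]
      _ = (Z⁻¹ / ρ2 x₂) * ∫ p : UnitAddCircle × (Fin k → UnitAddCircle),
            Real.exp (-β * V (p.1, x₂, p.2)) / ρ1 p.1 := integral_const_mul _ _
      _ = (Z⁻¹ / ρ2 x₂) * (ρ2 x₂ / c₂) := by rw [hJ]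
      _ = Z⁻¹ / c₂ := by
          rw [div_mul_div_comm, mul_comm Z⁻¹ (ρ2 x₂),
            mul_div_mul_left _ _ (hρ2ne x₂)]
  -- integrability
  have hint : Integrable ψi :=
    hψcont.integrable_of_hasCompactSupport (HasCompactSupport.of_compactSpace _)
  -- total integral via Fubini in the first variable
  have htot1 : (∫ x, ψi x) = Z⁻¹ / c₁ := by
    rw [show (∫ x, ψi x) = ∫ a, ∫ p, ψi (a, p) from integral_prod _ hint]
    have h : ∀ a : UnitAddCircle, (∫ p, ψi (a, p))
        = ∫ p : UnitAddCircle × (Fin k → UnitAddCircle), ψi (a, p.1, p.2) :=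
      fun a => rfl
    simp_rw [h, key1, integral_const, probReal_univ, one_smul]
  -- swap the first two coordinates measure-preservingly
  have htot2 : (∫ x, ψi x) = Z⁻¹ / c₂ := by
    set e : (UnitAddCircle × UnitAddCircle × (Fin k → UnitAddCircle)) ≃ᵐ
        (UnitAddCircle × UnitAddCircle × (Fin k → UnitAddCircle)) :=
      MeasurableEquiv.prodAssoc.symm.trans
        ((((MeasurableEquiv.prodComm : UnitAddCircle × UnitAddCircle ≃ᵐ UnitAddCircle × UnitAddCircle)).prodCongr
          (MeasurableEquiv.refl (Fin k → UnitAddCircle))).trans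
          MeasurableEquiv.prodAssoc) with he_def
    have he : MeasurePreserving e volume volume := by
      have h1 : MeasurePreserving
          (MeasurableEquiv.prodAssoc.symm :
            (UnitAddCircle × UnitAddCircle × (Fin k → UnitAddCircle)) ≃ᵐ
            ((UnitAddCircle × UnitAddCircle) × (Fin k → UnitAddCircle)))
          volume volume :=
        MeasureTheory.volume_preserving_prodAssoc.symm _
      have h2 : MeasurePreserving
          (Prod.map (Prod.swap : UnitAddCircle × UnitAddCircle → _)
            (id : (Fin k → UnitAddCircle) → _)) volume volume :=
        (Measure.measurePreserving_swap).prod (MeasurePreserving.id _)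
      have h3 : MeasurePreserving
          (MeasurableEquiv.prodAssoc :
            ((UnitAddCircle × UnitAddCircle) × (Fin k → UnitAddCircle)) ≃ᵐ
            (UnitAddCircle × UnitAddCircle × (Fin k → UnitAddCircle)))
          volume volume :=
        MeasureTheory.volume_preserving_prodAssoc
      exact (h3.comp h2).comp h1
    have hcomp : (∫ x, ψi x)
        = ∫ x : UnitAddCircle × UnitAddCircle × (Fin k → UnitAddCircle),
            ψi (x.2.1, x.1, x.2.2) := (he.integral_comp' ψi).symm
    have hgcont : Continuous
        (fun x : UnitAddCircle × UnitAddCircle × (Fin k → UnitAddCircle) =>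
          ψi (x.2.1, x.1, x.2.2)) :=
      hψcont.comp ((continuous_fst.comp continuous_snd).prodMk
        (continuous_fst.prodMk (continuous_snd.comp continuous_snd)))
    have hgint : Integrable
        (fun x : UnitAddCircle × UnitAddCircle × (Fin k → UnitAddCircle) =>
          ψi (x.2.1, x.1, x.2.2)) :=
      hgcont.integrable_of_hasCompactSupport (HasCompactSupport.of_compactSpace _)
    rw [hcomp, show (∫ x : UnitAddCircle × UnitAddCircle × (Fin k → UnitAddCircle),
            ψi (x.2.1, x.1, x.2.2))
        = ∫ a : UnitAddCircle, ∫ p : UnitAddCircle × (Fin k → UnitAddCircle),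
            ψi (p.1, a, p.2) from integral_prod _ hgint]
    have h : ∀ b : UnitAddCircle,
        (∫ p : UnitAddCircle × (Fin k → UnitAddCircle), ψi (p.1, b, p.2))
          = Z⁻¹ / c₂ := key2
    simp_rw [h, integral_const, probReal_univ, one_smul]
  refine ⟨fun x₁ => ?_, fun x₂ => ?_⟩
  · rw [key1, ← htot1, hnorm]
  · rw [key2, ← htot2, hnorm]
end
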